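/- arXiv:2310.00334 — 12 statements merged into one kernel-verified Lean document; each statement's English description precedes it below -/
import Mathlib

section
/- Let m ≥ n ≥ 1 and let B : {0,1}^n → F_2^m be a fixed map. Suppose that for every x in {0,1}^n there is an affine function Q_x : F_2^m → F_2, i.e., Q_x(z) = c_x + Σ_j a_{x,j} z_j over F_2 in m variables z, such that Q_x(B(y)) = EQ(x,y) for all y ∈ {0,1}^n, where EQ(x,y) = 1 if x = y and 0 otherwise. Then m ≥ 2^n − 1. -/
/-- If for every `x ∈ {0,1}^n` there is an affine function
`Q_x(w) = c_x + Σ_j a_{x,j} w_j` over `F_2` on `m` variables such that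
`Q_x(B(y)) = EQ(x,y)` for all `y`, where `B : {0,1}^n → F_2^m` is a fixed map,
then `m ≥ 2^n − 1`. -/
theorem stmt0 (n m : ℕ) (hn : 1 ≤ n) (hnm : n ≤ m)
    (B : (Fin n → Bool) → Fin m → ZMod 2)
    (c : (Fin n → Bool) → ZMod 2)
    (a : (Fin n → Bool) → Fin m → ZMod 2)
    (h : ∀ x y : Fin n → Bool,
      c x + ∑ j, a x j * B y j = (if x = y then 1 else 0)) :
    2 ^ n - 1 ≤ m := by
  classical
  let L : (ZMod 2 × (Fin m → ZMod 2)) →ₗ[ZMod 2] ((Fin n → Bool) → ZMod 2) :=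
    { toFun := fun p => fun y => p.1 + ∑ j, p.2 j * B y j
      map_add' := by
        intro p q; funext y
        simp [Finset.sum_add_distrib, add_mul]
        ring
      map_smul' := by
        intro r p; funext y
        simp [Finset.mul_sum, mul_add, mul_assoc] }
  have key : LinearIndependent (ZMod 2)
      (fun x : Fin n → Bool => ((c x, a x) : ZMod 2 × (Fin m → ZMod 2))) := by
    apply LinearIndependent.of_comp L
    have heq : (L ∘ fun x => ((c x, a x) : ZMod 2 × (Fin m → ZMod 2)))
        = fun x y => if x = y then 1 else 0 := by
      funext x y
      simpa [L] using h x y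
    rw [heq]
    have hb := (Pi.basisFun (ZMod 2) (Fin n → Bool)).linearIndependent
    convert hb using 1
    funext x
    funext y
    simp [Pi.basisFun_apply, Pi.single_apply, eq_comm]
  have hcard := key.fintype_card_le_finrank
  have hrank : Module.finrank (ZMod 2) (ZMod 2 × (Fin m → ZMod 2)) = 1 + m := by
    simp
  rw [hrank] at hcard
  have h2 : Fintype.card (Fin n → Bool) = 2 ^ n := by simp
  rw [h2] at hcard
  omega
end

section
/- Suppose the n-bit equality function admits a representation EQ(x,y) = P(A(x), B(y)) where A, B : {0,1}^n → F_2^m and P is an F_2-polynomial of total degree d on 2m variables, with n ≤ m. Then Σ_{i=0}^{d} C(m,i) ≥ 2^n − 1, and consequently d ≥ n / log₂(m+1). -/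
/-!
Over `𝔽₂` every coordinate of `A x` and `B y` is idempotent, so each monomial of `P` evaluates
to a product `Z_S(A x) · W_T(B y)` of multilinear monomials with `|S| ≤ d`. Grouping the monomials
by their left part `S` factors the `2ⁿ × 2ⁿ` identity matrix `EQ` through a space of dimension
`#{S : |S| ≤ d} ≤ ∑_{i ≤ d} C(m,i) ≤ (m+1)^d`, and comparing ranks gives both bounds.
-/

open Finset MvPolynomial

lemma Finsupp.card_support_le_sum {α : Type*} (μ : α →₀ ℕ) : #μ.support ≤ μ.sum fun _ e => e := by
  rw [card_eq_sum_ones, Finsupp.sum]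
  refine Finset.sum_le_sum fun i hi => ?_
  exact Nat.one_le_iff_ne_zero.mpr (Finsupp.mem_support_iff.mp hi)

lemma card_filter_card_le_le_sum_choose (α : Type*) [Fintype α] [DecidableEq α] (d : ℕ) :
    #{S : Finset α | #S ≤ d} ≤ ∑ k ∈ range (d + 1), (Fintype.card α).choose k := by
  simp_rw [← card_univ, ← card_powersetCard]
  refine (card_le_card fun S hS ↦ mem_biUnion.2 ⟨#S, ?_⟩).trans card_biUnion_le
  simp only [mem_filter, mem_univ, true_and] at hS
  exact ⟨mem_range.2 (Nat.lt_succ_of_le hS), mem_powersetCard_univ.2 rfl⟩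

lemma Nat.sum_range_choose_le_add_one_pow (m d : ℕ) :
    ∑ i ∈ range (d + 1), m.choose i ≤ (m + 1) ^ d := by
  induction d with
  | zero => simp
  | succ k ih =>
    calc ∑ i ∈ range (k + 2), m.choose i
        = ∑ i ∈ range (k + 1), m.choose i + m.choose (k + 1) := sum_range_succ _ _
      _ ≤ (m + 1) ^ k + m * (m + 1) ^ k := by
          gcongr
          calc m.choose (k + 1) ≤ m ^ (k + 1) := Nat.choose_le_pow _ _
            _ = m * m ^ k := pow_succ'
            _ ≤ m * (m + 1) ^ k := by gcongr; omega
      _ = (m + 1) ^ (k + 1) := by ring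

lemma ZMod.isIdempotentElem_two (a : ZMod 2) : IsIdempotentElem a :=
  (sq a).symm.trans (ZMod.pow_card a)

namespace MvPolynomial

variable {R σ τ : Type*} [CommSemiring R]

lemma eval_eq_sum_prod_support_of_isIdempotentElem {x : σ → R}
    (hx : ∀ i, IsIdempotentElem (x i)) (P : MvPolynomial σ R) :
    eval x P = ∑ μ ∈ P.support, P.coeff μ * ∏ i ∈ μ.support, x i := by
  rw [eval_eq]
  refine sum_congr rfl fun μ _ => congrArg _ (prod_congr rfl fun i hi => ?_)
  exact (hx i).pow_eq (Finsupp.mem_support_iff.mp hi)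

lemma card_support_toLeft_le_totalDegree {P : MvPolynomial (σ ⊕ τ) R} {μ : σ ⊕ τ →₀ ℕ}
    (hμ : μ ∈ P.support) : #μ.support.toLeft ≤ P.totalDegree :=
  card_toLeft_le.trans ((μ.card_support_le_sum).trans (le_totalDegree hμ))

variable [DecidableEq σ]

/-- The coefficient of `∏ i ∈ S, a i` in the multilinearised evaluation of `P` at
`Sum.elim a b`. -/
noncomputable def rightCofactor (P : MvPolynomial (σ ⊕ τ) R) (S : Finset σ) (b : τ → R) : R :=
  ∑ μ ∈ P.support with μ.support.toLeft = S, P.coeff μ * ∏ j ∈ μ.support.toRight, b j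

lemma eval_sumElim_eq_sum_prod_mul_rightCofactor [Fintype σ] {a : σ → R} {b : τ → R}
    (ha : ∀ i, IsIdempotentElem (a i)) (hb : ∀ j, IsIdempotentElem (b j))
    {P : MvPolynomial (σ ⊕ τ) R} {d : ℕ} (hP : P.totalDegree ≤ d) :
    eval (Sum.elim a b) P =
      ∑ S : {S : Finset σ // #S ≤ d}, (∏ i ∈ S.1, a i) * P.rightCofactor S b := by
  have hmaps : ∀ μ ∈ P.support, μ.support.toLeft ∈ ({S : Finset σ | #S ≤ d} : Finset _) :=
    fun μ hμ => by simpa using (card_support_toLeft_le_totalDegree hμ).trans hP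
  rw [eval_eq_sum_prod_support_of_isIdempotentElem (Sum.forall.2 ⟨ha, hb⟩),
    ← sum_subtype {S : Finset σ | #S ≤ d} (by simp)
      fun S => (∏ i ∈ S, a i) * P.rightCofactor S b, ← sum_fiberwise_of_maps_to
      (t := {S : Finset σ | #S ≤ d}) (g := fun μ => μ.support.toLeft) hmaps]
  refine sum_congr rfl fun S _ => ?_
  rw [rightCofactor, mul_sum]
  refine sum_congr rfl fun μ hμ => ?_
  rw [← (mem_filter.1 hμ).2]
  conv_lhs => rw [← toLeft_disjSum_toRight (u := μ.support), prod_disjSum]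
  simp only [Sum.elim_inl, Sum.elim_inr]
  ring

theorem rank_eval_sumElim_le [StrongRankCondition R] [Fintype σ] {X Y : Type*} [Fintype Y]
    {P : MvPolynomial (σ ⊕ τ) R} {d : ℕ} (hP : P.totalDegree ≤ d)
    (A : X → σ → R) (B : Y → τ → R) (hA : ∀ x i, IsIdempotentElem (A x i))
    (hB : ∀ y j, IsIdempotentElem (B y j)) :
    (Matrix.of fun x y => eval (Sum.elim (A x) (B y)) P).rank ≤ #{S : Finset σ | #S ≤ d} := by
  have hfactor : (Matrix.of fun x y => eval (Sum.elim (A x) (B y)) P) =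
      Matrix.of (fun x (S : {S : Finset σ // #S ≤ d}) => ∏ i ∈ S.1, A x i) *
        Matrix.of fun (S : {S : Finset σ // #S ≤ d}) y => P.rightCofactor S (B y) := by
    ext x y
    simp [Matrix.mul_apply, eval_sumElim_eq_sum_prod_mul_rightCofactor (hA x) (hB y) hP]
  rw [hfactor, ← Fintype.card_subtype]
  exact (Matrix.rank_mul_le_left _ _).trans (Matrix.rank_le_card_width _)

end MvPolynomial

lemma div_logb_le_of_pow_le {b c n d : ℕ} (hb : 1 < b) (h : b ^ n ≤ c ^ d) :
    (n : ℝ) / Real.logb b c ≤ d := by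
  rcases Nat.eq_zero_or_pos c with rfl | hc
  · simp
  have hb' : (1 : ℝ) < b := by exact_mod_cast hb
  refine div_le_of_le_mul₀ (Real.logb_nonneg hb' (by exact_mod_cast hc)) d.cast_nonneg ?_
  calc (n : ℝ) = Real.logb b ((b : ℝ) ^ n) := by
        rw [Real.logb_pow, Real.logb_self_eq_one hb', mul_one]
    _ ≤ Real.logb b ((c : ℝ) ^ d) :=
        Real.logb_le_logb_of_le hb' (by positivity) (by exact_mod_cast h)
    _ = d * Real.logb b c := Real.logb_pow _ _ _

theorem stmt1_general (n m d : ℕ)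
    (A B : (Fin n → Bool) → Fin m → ZMod 2)
    (P : MvPolynomial (Fin m ⊕ Fin m) (ZMod 2))
    (hdeg : P.totalDegree ≤ d)
    (h : ∀ x y : Fin n → Bool,
      MvPolynomial.eval (Sum.elim (A x) (B y)) P = (if x = y then 1 else 0)) :
    2 ^ n - 1 ≤ ∑ i ∈ Finset.range (d + 1), m.choose i ∧
      (n : ℝ) / Real.logb 2 (m + 1) ≤ (d : ℝ) := by
  have hone : (Matrix.of fun x y => eval (Sum.elim (A x) (B y)) P) = 1 := by
    ext x y
    simp [h, Matrix.one_apply]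
  have hcount : 2 ^ n ≤ ∑ i ∈ range (d + 1), m.choose i := by
    have hrank := rank_eval_sumElim_le hdeg A B (fun _ _ => ZMod.isIdempotentElem_two _)
      (fun _ _ => ZMod.isIdempotentElem_two _)
    rw [hone, Matrix.rank_one] at hrank
    simpa using hrank.trans (card_filter_card_le_le_sum_choose (Fin m) d)
  refine ⟨(Nat.sub_le _ _).trans hcount, ?_⟩
  exact_mod_cast div_logb_le_of_pow_le one_lt_two
    (hcount.trans (Nat.sum_range_choose_le_add_one_pow m d))

/-- If `EQ(x,y) = P(A(x), B(y))` where `A,B : {0,1}^n → F_2^m` and `P`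
is an `F_2`-polynomial of total degree at most `d` on `2m` variables, with `n ≤ m`,
then `Σ_{i=0}^{d} C(m,i) ≥ 2^n − 1`, and consequently `d ≥ n / log₂(m+1)`. -/
theorem stmt1 (n m d : ℕ) (hn : 1 ≤ n) (hnm : n ≤ m)
    (A B : (Fin n → Bool) → Fin m → ZMod 2)
    (P : MvPolynomial (Fin m ⊕ Fin m) (ZMod 2))
    (hdeg : P.totalDegree ≤ d)
    (h : ∀ x y : Fin n → Bool,
      MvPolynomial.eval (Sum.elim (A x) (B y)) P = (if x = y then 1 else 0)) :
    2 ^ n - 1 ≤ ∑ i ∈ Finset.range (d + 1), m.choose i ∧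
      (n : ℝ) / Real.logb 2 (m + 1) ≤ (d : ℝ) :=
  stmt1_general n m d A B P hdeg h
end

section
/- Suppose a bilinear polynomial map p(X,Y) over a field (e.g. matrix multiplication of n×n matrices) is computed as p(X,Y) = C(a(X), b(Y)) where a, b are arbitrary (not necessarily polynomial-size) polynomial maps of the inputs X and Y respectively, and C is computed by an arithmetic circuit using t multiplication gates (and arbitrary linear operations). Then the bilinear part of p has a representation as a sum of at most 2t products of (a linear form in X) times (a linear form in Y); in particular, if p is n×n matrix multiplication then t ≥ R(n)/2, where R(n) is the tensor rank of n×n matrix multiplication. -/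
open MvPolynomial

/-- The bilinear part of a polynomial in `X`-variables (left summand) and
`Y`-variables (right summand): the sum of its monomials of the form `x·y`. -/
noncomputable def abPart {ι₁ ι₂ F : Type} [Fintype ι₁] [Fintype ι₂] [Field F]
    (p : MvPolynomial (ι₁ ⊕ ι₂) F) : MvPolynomial (ι₁ ⊕ ι₂) F :=
  ∑ x : ι₁, ∑ y : ι₂,
    MvPolynomial.monomial
      (Finsupp.single (Sum.inl x) 1 + Finsupp.single (Sum.inr y) 1)
      (p.coeff (Finsupp.single (Sum.inl x) 1 + Finsupp.single (Sum.inr y) 1))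

/-- A linear form in the `X`-variables. -/
noncomputable def linX {ι₁ ι₂ F : Type} [Fintype ι₁] [Field F]
    (L : ι₁ → F) : MvPolynomial (ι₁ ⊕ ι₂) F :=
  ∑ x : ι₁, MvPolynomial.C (L x) * MvPolynomial.X (Sum.inl x)

/-- A linear form in the `Y`-variables. -/
noncomputable def linY {ι₁ ι₂ F : Type} [Fintype ι₂] [Field F]
    (M : ι₂ → F) : MvPolynomial (ι₁ ⊕ ι₂) F :=
  ∑ y : ι₂, MvPolynomial.C (M y) * MvPolynomial.X (Sum.inr y)

/-- The `(i,j)` entry of the product of two `n × n` matrices of indeterminates. -/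
noncomputable def MMpoly (n : ℕ) (F : Type) [Field F] (i j : Fin n) :
    MvPolynomial ((Fin n × Fin n) ⊕ (Fin n × Fin n)) F :=
  ∑ kk : Fin n, MvPolynomial.X (Sum.inl (i, kk)) * MvPolynomial.X (Sum.inr (kk, j))

/-- The tensor rank of `n × n` matrix multiplication: the least `r` such that every
entry of the matrix product is an `F`-linear combination of `r` fixed products of a
linear form in the `X` entries times a linear form in the `Y` entries. -/
noncomputable def matmulRank (n : ℕ) (F : Type) [Field F] : ℕ :=
  sInf {r | ∃ (L M : Fin r → Fin n × Fin n → F) (w : Fin n → Fin n → Fin r → F),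
    ∀ i j, MMpoly n F i j =
      ∑ s, MvPolynomial.C (w i j s) * (linX (L s) * linY (M s))}

/-!
Write `c(P)`, `a(P)`, `b(P)`, `ab(P)` for the constant, `X`-linear, `Y`-linear and bilinear
parts of `P`. The inputs `a i` (only `X`-variables) and `b j` (only `Y`-variables) have no
bilinear part, so by linearity `ab` of every wire is a combination of `ab` of earlier gates.
For a gate `G = U * V` the Leibniz rule gives
`ab(UV) = c(U) ab(V) + c(V) ab(U) + a(U) b(V) + a(V) b(U)`,
so by induction over the gates every `ab(G g)` lies in the span of the `2t` rank-one matrices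
`a(U g) ⊗ b(V g)`, `a(V g) ⊗ b(U g)`; hence so does `ab` of every output. For matrix
multiplication the output is its own bilinear part, which bounds the tensor rank by `2t`.
-/
namespace MvPolynomial

variable {ι₁ ι₂ R : Type*} [CommSemiring R]

-- `aCoeff P`, `bCoeff P`, `abCoeff P` are the coefficient vectors and matrix of `a(P)`, `b(P)`,
-- `ab(P)`; `c(P)` is `constantCoeff P`.
noncomputable def aCoeff (p : MvPolynomial (ι₁ ⊕ ι₂) R) (x : ι₁) : R :=
  coeff (Finsupp.single (Sum.inl x) 1) p

noncomputable def bCoeff (p : MvPolynomial (ι₁ ⊕ ι₂) R) (y : ι₂) : R :=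
  coeff (Finsupp.single (Sum.inr y) 1) p

noncomputable def abCoeff : MvPolynomial (ι₁ ⊕ ι₂) R →ₗ[R] Matrix ι₁ ι₂ R :=
  LinearMap.pi fun x => LinearMap.pi fun y =>
    lcoeff R (Finsupp.single (Sum.inl x) 1 + Finsupp.single (Sum.inr y) 1)

theorem abCoeff_apply (p : MvPolynomial (ι₁ ⊕ ι₂) R) (x : ι₁) (y : ι₂) :
    abCoeff p x y = coeff (Finsupp.single (Sum.inl x) 1 + Finsupp.single (Sum.inr y) 1) p := rfl

theorem constantCoeff_pderiv {σ : Type*} (i : σ) (p : MvPolynomial σ R) :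
    constantCoeff (pderiv i p) = coeff (Finsupp.single i 1) p := by
  simp [constantCoeff_eq, coeff_pderiv]

-- Reading `ab(P)` as `∂ₓ∂ᵧ P` at `0` turns the Leibniz rule into `abCoeff_mul`.
theorem abCoeff_apply_eq_constantCoeff_pderiv (p : MvPolynomial (ι₁ ⊕ ι₂) R) (x : ι₁)
    (y : ι₂) :
    abCoeff p x y = constantCoeff (pderiv (Sum.inl x) (pderiv (Sum.inr y) p)) := by
  simp [constantCoeff_pderiv, coeff_pderiv, abCoeff_apply]

theorem abCoeff_mul (p q : MvPolynomial (ι₁ ⊕ ι₂) R) :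
    abCoeff (p * q) = constantCoeff p • abCoeff q + constantCoeff q • abCoeff p +
      Matrix.vecMulVec (aCoeff p) (bCoeff q) + Matrix.vecMulVec (aCoeff q) (bCoeff p) := by
  ext x y
  simp only [abCoeff_apply_eq_constantCoeff_pderiv, pderiv_mul, map_add, map_mul,
    constantCoeff_pderiv, aCoeff, bCoeff, Matrix.add_apply, Matrix.smul_apply, smul_eq_mul,
    Matrix.vecMulVec_apply]
  ring

theorem abCoeff_C (c : R) : abCoeff (C c : MvPolynomial (ι₁ ⊕ ι₂) R) = 0 := by
  ext x y
  simp [abCoeff_apply_eq_constantCoeff_pderiv]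

theorem abCoeff_apply_eq_zero {p : MvPolynomial (ι₁ ⊕ ι₂) R} {x : ι₁} {y : ι₂}
    (h : Sum.inl x ∉ p.vars ∨ Sum.inr y ∉ p.vars) : abCoeff p x y = 0 := by
  by_contra hne
  have hs := mem_support_iff.2 hne
  rcases h with h | h <;> simpa using mem_support_notMem_vars_zero hs h

theorem abCoeff_eq_zero_of_vars_inl {p : MvPolynomial (ι₁ ⊕ ι₂) R}
    (hp : ∀ v ∈ p.vars, ∃ x, v = Sum.inl x) : abCoeff p = 0 := by
  ext x y
  refine abCoeff_apply_eq_zero (Or.inr fun hy => ?_)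
  obtain ⟨x', hx'⟩ := hp _ hy
  exact Sum.inr_ne_inl hx'

theorem abCoeff_eq_zero_of_vars_inr {p : MvPolynomial (ι₁ ⊕ ι₂) R}
    (hp : ∀ v ∈ p.vars, ∃ y, v = Sum.inr y) : abCoeff p = 0 := by
  ext x y
  refine abCoeff_apply_eq_zero (Or.inl fun hx => ?_)
  obtain ⟨y', hy'⟩ := hp _ hx
  exact Sum.inl_ne_inr hy'

theorem abCoeff_X_mul_X [DecidableEq ι₁] [DecidableEq ι₂] (x : ι₁) (y : ι₂) :
    abCoeff (X (Sum.inl x) * X (Sum.inr y) : MvPolynomial (ι₁ ⊕ ι₂) R) =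
      Matrix.vecMulVec (Pi.single x 1) (Pi.single y 1) := by
  ext x' y'
  rcases eq_or_ne x x' with rfl | hx <;> rcases eq_or_ne y y' with rfl | hy <;>
    simp [abCoeff_apply_eq_constantCoeff_pderiv, pderiv_X, Matrix.vecMulVec_apply, *]

theorem abCoeff_C_add_sum_add_sum_add_sum {ια ιβ κ : Type*} [Fintype ια] [Fintype ιβ]
    [Fintype κ] {a : ια → MvPolynomial (ι₁ ⊕ ι₂) R} {b : ιβ → MvPolynomial (ι₁ ⊕ ι₂) R}
    (ha : ∀ i, ∀ v ∈ (a i).vars, ∃ x, v = Sum.inl x)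
    (hb : ∀ j, ∀ v ∈ (b j).vars, ∃ y, v = Sum.inr y)
    (G : κ → MvPolynomial (ι₁ ⊕ ι₂) R) (c : R) (α : ια → R) (β : ιβ → R) (γ : κ → R) :
    abCoeff (C c + ∑ i, C (α i) * a i + ∑ j, C (β j) * b j + ∑ h, C (γ h) * G h) =
      ∑ h, γ h • abCoeff (G h) := by
  simp only [map_add, map_sum, C_mul', map_smul, abCoeff_C, abCoeff_eq_zero_of_vars_inl (ha _),
    abCoeff_eq_zero_of_vars_inr (hb _), smul_zero, Finset.sum_const_zero, zero_add]

section Circuit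

variable {κ : Type*} [Fintype κ] [LinearOrder κ]

-- Index `(0, g)` gives the cross term `a(U g) ⊗ b(V g)` of the gate `U g * V g`, and `(1, g)`
-- gives `a(V g) ⊗ b(U g)`.
noncomputable def crossA (U V : κ → MvPolynomial (ι₁ ⊕ ι₂) R) (s : Fin 2 × κ) : ι₁ → R :=
  ![aCoeff (U s.2), aCoeff (V s.2)] s.1

noncomputable def crossB (U V : κ → MvPolynomial (ι₁ ⊕ ι₂) R) (s : Fin 2 × κ) : ι₂ → R :=
  ![bCoeff (V s.2), bCoeff (U s.2)] s.1

theorem abCoeff_mem_span_crossA_crossB {G U V : κ → MvPolynomial (ι₁ ⊕ ι₂) R}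
    (hG : ∀ g, G g = U g * V g)
    (hU : ∀ g, ∃ γ : κ → R, (∀ h, g ≤ h → γ h = 0) ∧ abCoeff (U g) = ∑ h, γ h • abCoeff (G h))
    (hV : ∀ g, ∃ γ : κ → R, (∀ h, g ≤ h → γ h = 0) ∧ abCoeff (V g) = ∑ h, γ h • abCoeff (G h))
    (g : κ) :
    abCoeff (G g) ∈ Submodule.span R
      (Set.range fun s => Matrix.vecMulVec (crossA U V s) (crossB U V s)) := by
  induction g using WellFoundedLT.induction with
  | _ g ih =>
  have earlier_mem : ∀ γ : κ → R, (∀ h, g ≤ h → γ h = 0) →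
      ∑ h, γ h • abCoeff (G h) ∈ Submodule.span R
        (Set.range fun s => Matrix.vecMulVec (crossA U V s) (crossB U V s)) :=
    fun γ hγ => Submodule.sum_mem _ fun h _ => by
      rcases le_or_gt g h with hgh | hhg
      · simp [hγ h hgh]
      · exact Submodule.smul_mem _ _ (ih h hhg)
  obtain ⟨γ, hγ, hUγ⟩ := hU g
  obtain ⟨γ', hγ', hVγ⟩ := hV g
  rw [hG, abCoeff_mul]
  refine add_mem (add_mem (add_mem ?_ ?_) (Submodule.subset_span ⟨(0, g), rfl⟩))
    (Submodule.subset_span ⟨(1, g), rfl⟩)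
  · exact Submodule.smul_mem _ _ (hVγ ▸ earlier_mem γ' hγ')
  · exact Submodule.smul_mem _ _ (hUγ ▸ earlier_mem γ hγ)

end Circuit

end MvPolynomial

section AbPart

variable {ι₁ ι₂ F : Type} [Fintype ι₁] [Fintype ι₂] [Field F]

theorem abPart_eq_sum_abCoeff (p : MvPolynomial (ι₁ ⊕ ι₂) F) :
    abPart p = ∑ x, ∑ y, C (abCoeff p x y) * (X (Sum.inl x) * X (Sum.inr y)) := by
  simp only [abPart, abCoeff_apply, X, monomial_mul, C_mul_monomial, mul_one]

theorem linX_mul_linY (L : ι₁ → F) (M : ι₂ → F) :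
    linX L * linY M = ∑ x, ∑ y, C (L x * M y) * (X (Sum.inl x) * X (Sum.inr y)) := by
  simp only [linX, linY, Finset.sum_mul_sum, map_mul]
  exact Finset.sum_congr rfl fun x _ => Finset.sum_congr rfl fun y _ => by ring

theorem exists_abPart_eq_sum_of_mem_span {ρ : Type*} [Fintype ρ] {p : MvPolynomial (ι₁ ⊕ ι₂) F}
    {L : ρ → ι₁ → F} {M : ρ → ι₂ → F}
    (hp : abCoeff p ∈ Submodule.span F (Set.range fun s => Matrix.vecMulVec (L s) (M s))) :
    ∃ w : ρ → F, abPart p = ∑ s, C (w s) * (linX (L s) * linY (M s)) := by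
  obtain ⟨w, hw⟩ := (Submodule.mem_span_range_iff_exists_fun F).1 hp
  refine ⟨w, ?_⟩
  simp only [abPart_eq_sum_abCoeff, linX_mul_linY, ← hw, Finset.mul_sum, Matrix.sum_apply,
    Matrix.smul_apply, Matrix.vecMulVec_apply, smul_eq_mul, map_sum, map_mul, Finset.sum_mul,
    mul_assoc]
  exact (Finset.sum_congr rfl fun x _ => Finset.sum_comm).trans Finset.sum_comm

theorem abPart_MMpoly (n : ℕ) (F : Type) [Field F] (i j : Fin n) :
    abPart (MMpoly n F i j) = MMpoly n F i j := by
  simp only [abPart_eq_sum_abCoeff, MMpoly, map_sum, abCoeff_X_mul_X, Matrix.sum_apply,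
    Matrix.vecMulVec_apply, Pi.single_apply, Finset.sum_mul]
  refine ((Finset.sum_congr rfl fun x _ => Finset.sum_comm).trans Finset.sum_comm).trans
    (Finset.sum_congr rfl fun k _ => ?_)
  simp [apply_ite C, ite_mul, Finset.sum_ite_eq']

end AbPart

/-- If a bilinear polynomial map `p(X,Y)` (e.g. `n × n` matrix
multiplication) is computed as `p(X,Y) = C(a(X), b(Y))` where `a, b` are arbitrary
polynomial maps of `X` resp. `Y`, and `C` is an arithmetic circuit (straight-line
program) using `t` multiplication gates `G` and arbitrary affine/linear operations,
then the bilinear part of each output is a linear combination of at most `2t`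
products of (a linear form in `X`) times (a linear form in `Y`); in particular, if
the outputs are the entries of the `n × n` matrix product then `2t ≥ R(n)`, the
tensor rank of matrix multiplication. -/
theorem stmt3 (n t : ℕ) (F : Type) [Field F] (k l : ℕ)
    (a : Fin k → MvPolynomial ((Fin n × Fin n) ⊕ (Fin n × Fin n)) F)
    (b : Fin l → MvPolynomial ((Fin n × Fin n) ⊕ (Fin n × Fin n)) F)
    (ha : ∀ i, ∀ v ∈ (a i).vars, ∃ x, v = Sum.inl x)
    (hb : ∀ j, ∀ v ∈ (b j).vars, ∃ y, v = Sum.inr y)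
    (G : Fin t → MvPolynomial ((Fin n × Fin n) ⊕ (Fin n × Fin n)) F)
    (hG : ∀ g : Fin t, ∃ (c c' : F) (α α' : Fin k → F) (β β' : Fin l → F)
        (γ γ' : Fin t → F),
      (∀ h : Fin t, g ≤ h → γ h = 0 ∧ γ' h = 0) ∧
      G g =
        (MvPolynomial.C c + ∑ i, MvPolynomial.C (α i) * a i +
            ∑ j, MvPolynomial.C (β j) * b j + ∑ h, MvPolynomial.C (γ h) * G h) *
        (MvPolynomial.C c' + ∑ i, MvPolynomial.C (α' i) * a i +
            ∑ j, MvPolynomial.C (β' j) * b j + ∑ h, MvPolynomial.C (γ' h) * G h))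
    (out : Fin n → Fin n → MvPolynomial ((Fin n × Fin n) ⊕ (Fin n × Fin n)) F)
    (hout : ∀ i j, ∃ (c : F) (α : Fin k → F) (β : Fin l → F) (γ : Fin t → F),
      out i j = MvPolynomial.C c + ∑ i', MvPolynomial.C (α i') * a i' +
        ∑ j', MvPolynomial.C (β j') * b j' + ∑ h, MvPolynomial.C (γ h) * G h) :
    (∃ (L M : Fin (2 * t) → Fin n × Fin n → F)
        (w : Fin n → Fin n → Fin (2 * t) → F),
      ∀ i j, abPart (out i j) =
        ∑ s, MvPolynomial.C (w i j s) * (linX (L s) * linY (M s))) ∧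
    ((∀ i j, out i j = MMpoly n F i j) → matmulRank n F ≤ 2 * t) := by
  choose c c' α α' β β' γ γ' hγ hGUV using hG
  choose oc oα oβ oγ hout using hout
  let U g := C (c g) + ∑ i, C (α g i) * a i + ∑ j, C (β g j) * b j + ∑ h, C (γ g h) * G h
  let V g := C (c' g) + ∑ i, C (α' g i) * a i + ∑ j, C (β' g j) * b j + ∑ h, C (γ' g h) * G h
  let L := crossA U V ∘ finProdFinEquiv.symm
  let M := crossB U V ∘ finProdFinEquiv.symm
  have hgate := abCoeff_mem_span_crossA_crossB (U := U) (V := V) hGUV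
    (fun g => ⟨γ g, fun h hh => (hγ g h hh).1, abCoeff_C_add_sum_add_sum_add_sum ha hb G _ _ _ _⟩)
    (fun g => ⟨γ' g, fun h hh => (hγ g h hh).2, abCoeff_C_add_sum_add_sum_add_sum ha hb G _ _ _ _⟩)
  have hrange : (Set.range fun s => Matrix.vecMulVec (L s) (M s)) =
      Set.range fun s => Matrix.vecMulVec (crossA U V s) (crossB U V s) :=
    EquivLike.range_comp (fun s => Matrix.vecMulVec (crossA U V s) (crossB U V s))
      finProdFinEquiv.symm
  have hspan : ∀ i j, abCoeff (out i j) ∈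
      Submodule.span F (Set.range fun s => Matrix.vecMulVec (L s) (M s)) := by
    intro i j
    rw [hout, abCoeff_C_add_sum_add_sum_add_sum ha hb, hrange]
    exact Submodule.sum_mem _ fun h _ => Submodule.smul_mem _ _ (hgate h)
  choose w hw using fun i j => exists_abPart_eq_sum_of_mem_span (hspan i j)
  refine ⟨⟨L, M, w, hw⟩, fun hMM => Nat.sInf_le ⟨L, M, w, fun i j => ?_⟩⟩
  rw [← abPart_MMpoly, ← hMM]
  exact hw i j
end

section
/- Fix n ≥ 1, set p = n·2^n + 1. Given nonnegative integers x_0,…,x_{n−1} < 2^n and y_i, z_i ∈ {0,…,p−1} with y_i + z_i ≡ x_i (mod p), define Y_i = y_i·8^n + 8^i, Z_i = z_i·8^n + 2·8^i, W_i = 3·8^i, and let U' = {Y_i, Z_i, W_i : 0 ≤ i ≤ n−1} (as a multiset). Then the multiset {x_0,…,x_{n−1}} has a partition into two parts of equal sum if and only if U' has a partition into two parts C', D' with Σ C' ≡ Σ D' (mod p·8^n). -/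
/-!
Write each of the sums `Σ C'`, `Σ D'` as `8^n · h + l` with `l < 8^n`. A congruence modulo
`p · 8^n` then says `h ≡ h' (mod p)` and `l = l'`. The low parts are base-8 numerals whose
`i`-th digit is the sum of the weights `1, 2, 3` of those of `Y_i, Z_i, W_i` lying on that side;
equal digits on the two sides force that digit to be `3 = 1 + 2`, i.e. `Y_i, Z_i` on one side and
`W_i` on the other. The high parts then reduce to `Σ_P (y_i + z_i) ≡ Σ_{Pᶜ} (y_i + z_i)`, i.e.
`Σ_P x_i ≡ Σ_{Pᶜ} x_i (mod p)`, and both sides are below `p = n·2^n + 1`.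
-/

open Finset

namespace Nat

theorem mul_add_modEq_mul_add_iff {B m h₁ h₂ l₁ l₂ : ℕ} (hl₁ : l₁ < B) (hl₂ : l₂ < B) :
    B * h₁ + l₁ ≡ B * h₂ + l₂ [MOD m * B] ↔ h₁ ≡ h₂ [MOD m] ∧ l₁ = l₂ := by
  rw [mul_comm m B]
  constructor
  · intro h
    have hl : l₁ = l₂ := by
      have h' := h.of_mul_right m
      simp only [ModEq, mul_add_mod_self_left] at h'
      rwa [mod_eq_of_lt hl₁, mod_eq_of_lt hl₂] at h'
    subst hl
    exact ⟨(h.add_right_cancel' l₁).mul_left_cancel' (by omega), rfl⟩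
  · rintro ⟨hh, rfl⟩
    exact (hh.mul_left' B).add_right l₁

variable {b n : ℕ} {c d : Fin n → ℕ}

theorem sum_mul_pow_lt (hc : ∀ i, c i < b) : ∑ i, c i * b ^ (i : ℕ) < b ^ n :=
  (finFunctionFinEquiv fun i => (⟨c i, hc i⟩ : Fin b)).isLt

theorem eq_of_sum_mul_pow_eq (hc : ∀ i, c i < b) (hd : ∀ i, d i < b)
    (h : ∑ i, c i * b ^ (i : ℕ) = ∑ i, d i * b ^ (i : ℕ)) : c = d := by
  have : (fun i => (⟨c i, hc i⟩ : Fin b)) = fun i => ⟨d i, hd i⟩ :=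
    finFunctionFinEquiv.injective (Fin.ext h)
  funext i
  exact congrArg Fin.val (congrFun this i)

end Nat

section LowPart

variable {n : ℕ}

/-- The base-8 digit contributed at position `i` by `Y_i ∈ S`, `Z_i ∈ T`, `W_i ∈ U`. -/
def lowDigit (S T U : Finset (Fin n)) (i : Fin n) : ℕ :=
  (if i ∈ S then 1 else 0) + (if i ∈ T then 2 else 0) + (if i ∈ U then 3 else 0)

def lowPart (S T U : Finset (Fin n)) : ℕ :=
  ∑ i ∈ S, 8 ^ (i : ℕ) + ∑ i ∈ T, 2 * 8 ^ (i : ℕ) + ∑ i ∈ U, 3 * 8 ^ (i : ℕ)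

theorem lowDigit_lt_eight (S T U : Finset (Fin n)) (i : Fin n) : lowDigit S T U i < 8 := by
  unfold lowDigit
  split_ifs <;> omega

theorem lowDigit_eq_lowDigit_compl_iff (S T U : Finset (Fin n)) (i : Fin n) :
    lowDigit S T U i = lowDigit Sᶜ Tᶜ Uᶜ i ↔ (i ∈ T ↔ i ∈ S) ∧ (i ∈ U ↔ i ∉ S) := by
  unfold lowDigit
  simp only [mem_compl]
  split_ifs <;> simp_all

theorem lowPart_eq_sum_lowDigit (S T U : Finset (Fin n)) :
    lowPart S T U = ∑ i, lowDigit S T U i * 8 ^ (i : ℕ) := by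
  simp only [lowPart, lowDigit, add_mul, ite_mul, zero_mul, one_mul, sum_add_distrib,
    sum_ite_mem, univ_inter]

theorem lowPart_lt (S T U : Finset (Fin n)) : lowPart S T U < 8 ^ n := by
  rw [lowPart_eq_sum_lowDigit]
  exact Nat.sum_mul_pow_lt (lowDigit_lt_eight S T U)

theorem lowPart_eq_lowPart_compl_iff (S T U : Finset (Fin n)) :
    lowPart S T U = lowPart Sᶜ Tᶜ Uᶜ ↔ T = S ∧ U = Sᶜ := by
  constructor
  · intro h
    rw [lowPart_eq_sum_lowDigit, lowPart_eq_sum_lowDigit] at h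
    have hdigit := Nat.eq_of_sum_mul_pow_eq (lowDigit_lt_eight _ _ _) (lowDigit_lt_eight _ _ _) h
    constructor <;> ext i
    · exact ((lowDigit_eq_lowDigit_compl_iff S T U i).1 (congrFun hdigit i)).1
    · simpa using ((lowDigit_eq_lowDigit_compl_iff S T U i).1 (congrFun hdigit i)).2
  · rintro ⟨rfl, rfl⟩
    rw [compl_compl, lowPart_eq_sum_lowDigit, lowPart_eq_sum_lowDigit]
    refine sum_congr rfl fun i _ => ?_
    rw [(lowDigit_eq_lowDigit_compl_iff T T Tᶜ i).2 ⟨Iff.rfl, by simp⟩, compl_compl]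

theorem sum_add_sum_add_sum_eq_mul_add_lowPart {y z Y Z W : Fin n → ℕ}
    (hY : ∀ i, Y i = y i * 8 ^ n + 8 ^ (i : ℕ))
    (hZ : ∀ i, Z i = z i * 8 ^ n + 2 * 8 ^ (i : ℕ))
    (hW : ∀ i, W i = 3 * 8 ^ (i : ℕ)) (S T U : Finset (Fin n)) :
    ∑ i ∈ S, Y i + ∑ i ∈ T, Z i + ∑ i ∈ U, W i =
      8 ^ n * (∑ i ∈ S, y i + ∑ i ∈ T, z i) + lowPart S T U := by
  simp only [hY, hZ, hW, lowPart, sum_add_distrib, ← sum_mul]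
  ring

end LowPart

theorem sum_le_card_mul_of_lt {n B : ℕ} {x : Fin n → ℕ} (hx : ∀ i, x i < B)
    (S : Finset (Fin n)) : ∑ i ∈ S, x i ≤ n * B :=
  calc ∑ i ∈ S, x i ≤ ∑ i, x i := sum_le_sum_of_subset (subset_univ S)
    _ ≤ ∑ _i : Fin n, B := sum_le_sum fun i _ => (hx i).le
    _ = n * B := by simp

theorem stmt4_general (n : ℕ) (x y z : Fin n → ℕ)
    (hx : ∀ i, x i < 2 ^ n)
    (hyz : ∀ i, y i + z i ≡ x i [MOD n * 2 ^ n + 1])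
    (Y Z W : Fin n → ℕ)
    (hY : ∀ i, Y i = y i * 8 ^ n + 8 ^ (i : ℕ))
    (hZ : ∀ i, Z i = z i * 8 ^ n + 2 * 8 ^ (i : ℕ))
    (hW : ∀ i, W i = 3 * 8 ^ (i : ℕ)) :
    (∃ P : Finset (Fin n), ∑ i ∈ P, x i = ∑ i ∈ Pᶜ, x i) ↔
    (∃ SY SZ SW : Finset (Fin n),
      (∑ i ∈ SY, Y i + ∑ i ∈ SZ, Z i + ∑ i ∈ SW, W i) ≡
        (∑ i ∈ SYᶜ, Y i + ∑ i ∈ SZᶜ, Z i + ∑ i ∈ SWᶜ, W i)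
        [MOD (n * 2 ^ n + 1) * 8 ^ n]) := by
  have hsplit := sum_add_sum_add_sum_eq_mul_add_lowPart hY hZ hW
  have hcong : ∀ S T U : Finset (Fin n),
      (∑ i ∈ S, Y i + ∑ i ∈ T, Z i + ∑ i ∈ U, W i) ≡
        (∑ i ∈ Sᶜ, Y i + ∑ i ∈ Tᶜ, Z i + ∑ i ∈ Uᶜ, W i) [MOD (n * 2 ^ n + 1) * 8 ^ n] ↔
      (∑ i ∈ S, y i + ∑ i ∈ T, z i ≡ ∑ i ∈ Sᶜ, y i + ∑ i ∈ Tᶜ, z i [MOD n * 2 ^ n + 1]) ∧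
        T = S ∧ U = Sᶜ := fun S T U => by
    rw [hsplit, hsplit, Nat.mul_add_modEq_mul_add_iff (lowPart_lt _ _ _) (lowPart_lt _ _ _),
      lowPart_eq_lowPart_compl_iff]
  have hx_cong (S : Finset (Fin n)) :
      ∑ i ∈ S, y i + ∑ i ∈ S, z i ≡ ∑ i ∈ S, x i [MOD n * 2 ^ n + 1] := by
    rw [← sum_add_distrib]
    exact Nat.ModEq.sum fun i _ => hyz i
  have hx_lt (S : Finset (Fin n)) : ∑ i ∈ S, x i < n * 2 ^ n + 1 :=
    Nat.lt_succ_of_le (sum_le_card_mul_of_lt hx S)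
  constructor
  · rintro ⟨P, hP⟩
    refine ⟨P, P, Pᶜ, (hcong P P Pᶜ).2 ⟨?_, rfl, rfl⟩⟩
    exact (hx_cong P).trans (hP ▸ (hx_cong Pᶜ).symm)
  · rintro ⟨S, T, U, h⟩
    obtain ⟨hhigh, rfl, rfl⟩ := (hcong S T U).1 h
    exact ⟨T, ((hx_cong T).symm.trans (hhigh.trans (hx_cong Tᶜ))).eq_of_lt_of_lt
      (hx_lt T) (hx_lt Tᶜ)⟩

/-- With `p = n·2^n + 1`, `x_i < 2^n`, `y_i, z_i < p`,
`y_i + z_i ≡ x_i (mod p)`, `Y_i = y_i·8^n + 8^i`, `Z_i = z_i·8^n + 2·8^i`,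
`W_i = 3·8^i`, the multiset `{x_i}` has a partition into two parts of equal sum
iff the multiset `U' = {Y_i, Z_i, W_i}` has a partition into two parts `C', D'`
with `Σ C' ≡ Σ D' (mod p·8^n)`. -/
theorem stmt4 (n : ℕ) (hn : 1 ≤ n) (x y z : Fin n → ℕ)
    (hx : ∀ i, x i < 2 ^ n)
    (hy : ∀ i, y i < n * 2 ^ n + 1) (hz : ∀ i, z i < n * 2 ^ n + 1)
    (hyz : ∀ i, y i + z i ≡ x i [MOD n * 2 ^ n + 1])
    (Y Z W : Fin n → ℕ)
    (hY : ∀ i, Y i = y i * 8 ^ n + 8 ^ (i : ℕ))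
    (hZ : ∀ i, Z i = z i * 8 ^ n + 2 * 8 ^ (i : ℕ))
    (hW : ∀ i, W i = 3 * 8 ^ (i : ℕ)) :
    (∃ P : Finset (Fin n), ∑ i ∈ P, x i = ∑ i ∈ Pᶜ, x i) ↔
    (∃ SY SZ SW : Finset (Fin n),
      (∑ i ∈ SY, Y i + ∑ i ∈ SZ, Z i + ∑ i ∈ SW, W i) ≡
        (∑ i ∈ SYᶜ, Y i + ∑ i ∈ SZᶜ, Z i + ∑ i ∈ SWᶜ, W i)
        [MOD (n * 2 ^ n + 1) * 8 ^ n]) :=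
  stmt4_general n x y z hx hyz Y Z W hY hZ hW
end

section
/- Fix n even and a positive integer ℓ. The number of distinct functions g : {0,1}^n → {0,1} expressible as g(z_L, z_R) = C(A(z_L), B(z_R)) for some functions A, B : {0,1}^{n/2} → {0,1}^ℓ and some Boolean circuit C of size at most 2ℓ on 2ℓ inputs is at most 2^{O(ℓ·2^{n/2} + ℓ log ℓ)}. Consequently, if ℓ = o(2^{n/2}/n) then this count is o(2^{2^n}), so most Boolean functions g on n bits are not of this form; equivalently, most bitwise-XOR combined functions f(x,y) = g(x ⊕ y) require BSM preprocessing length Ω̃(2^{n/2}). -/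
/-- A Boolean circuit (straight-line program / DAG) with inputs indexed by `α`. -/
structure Circuit (α : Type) where
  size : ℕ
  in1 : ℕ → α ⊕ ℕ
  in2 : ℕ → α ⊕ ℕ
  op : ℕ → Bool → Bool → Bool
  wf1 : ∀ g h, in1 g = Sum.inr h → h < g
  wf2 : ∀ g h, in2 g = Sum.inr h → h < g

/-- The value computed at gate `g` on input `x`. -/
def Circuit.val {α : Type} (c : Circuit α) (x : α → Bool) (g : ℕ) : Bool :=
  c.op g
    ((c.in1 g).elim x (fun h => if _ : h < g then c.val x h else false))
    ((c.in2 g).elim x (fun h => if _ : h < g then c.val x h else false))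
termination_by g

/-- The value of a wire (input or gate). -/
def Circuit.read {α : Type} (c : Circuit α) (x : α → Bool) : α ⊕ ℕ → Bool :=
  Sum.elim x (c.val x)

/-!
A function computed by a circuit with at most `s` gates on inputs `α` is determined by the
wiring and operation of each of the `s` gates together with the output wire, i.e. by one of
`s ^ O(s)` codes once `|α| = O(s)`. A function `g(z_L, z_R) = C(A z_L, B z_R)` is determined by
`A`, `B` and the function computed by `C`, which gives the bound `2 ^ (2ℓ · 2 ^ (n/2)) · ℓ ^ O(ℓ)`.
-/

namespace Circuit

variable {α : Type}

/-- Only the output wire is bounded: gates at index `≥ s` cannot influence a wire below `s`. -/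
def functionsOfSizeLE (α : Type) (s : ℕ) : Set ((α → Bool) → Bool) :=
  {f | ∃ (c : Circuit α) (out : α ⊕ ℕ), (∀ h, out = Sum.inr h → h < s) ∧
    f = fun x => c.read x out}

theorem val_eq_of_forall_lt (c₁ c₂ : Circuit α) (x : α → Bool) {N : ℕ}
    (h1 : ∀ i < N, c₁.in1 i = c₂.in1 i) (h2 : ∀ i < N, c₁.in2 i = c₂.in2 i)
    (h3 : ∀ i < N, c₁.op i = c₂.op i) :
    ∀ g < N, c₁.val x g = c₂.val x g := by
  intro g
  induction g using Nat.strong_induction_on with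
  | _ g ih =>
    intro hg
    have earlier : (fun h => if _ : h < g then c₁.val x h else false)
        = (fun h => if _ : h < g then c₂.val x h else false) := by
      funext h
      split_ifs with hh
      · exact ih h hh (hh.trans hg)
      · rfl
    rw [val, val, h1 g hg, h2 g hg, h3 g hg, earlier]

/-- Wires `inr h` with `h < s` are encoded faithfully; larger gate indices wrap around. -/
def wireCode (s : ℕ) : α ⊕ ℕ → α ⊕ Fin (s + 1) :=
  Sum.map id (Fin.ofNat (s + 1))

theorem wireCode_injective {s : ℕ} {w₁ w₂ : α ⊕ ℕ}
    (hw₁ : ∀ h, w₁ = Sum.inr h → h < s) (hw₂ : ∀ h, w₂ = Sum.inr h → h < s)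
    (he : wireCode s w₁ = wireCode s w₂) : w₁ = w₂ := by
  rcases w₁ with a | h <;> rcases w₂ with b | k <;> simp only [wireCode, Sum.map_inl,
    Sum.map_inr, id, Sum.inl.injEq, Sum.inr.injEq, reduceCtorEq] at he ⊢
  · exact he
  · have hv := congrArg Fin.val he
    rwa [Fin.val_ofNat, Fin.val_ofNat, Nat.mod_eq_of_lt (by grind),
      Nat.mod_eq_of_lt (by grind)] at hv

def gateCode (s : ℕ) (c : Circuit α) (i : ℕ) :
    (α ⊕ Fin (s + 1)) × (α ⊕ Fin (s + 1)) × (Bool → Bool → Bool) :=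
  (wireCode s (c.in1 i), wireCode s (c.in2 i), c.op i)

/-- Gate `i` only reads wires below `i`, so below `s` the gate codes lose no information. -/
theorem val_eq_of_gateCode_eq {s : ℕ} (c₁ c₂ : Circuit α) (x : α → Bool)
    (hc : ∀ i < s, gateCode s c₁ i = gateCode s c₂ i) :
    ∀ g < s, c₁.val x g = c₂.val x g := by
  have wf_lt {c : Circuit α} {i : ℕ} (hi : i < s) :
      (∀ h, c.in1 i = Sum.inr h → h < s) ∧ ∀ h, c.in2 i = Sum.inr h → h < s :=
    ⟨fun h e => (c.wf1 i h e).trans hi, fun h e => (c.wf2 i h e).trans hi⟩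
  refine val_eq_of_forall_lt c₁ c₂ x (fun i hi => ?_) (fun i hi => ?_)
    (fun i hi => congrArg (·.2.2) (hc i hi))
  · exact wireCode_injective (wf_lt hi).1 (wf_lt hi).1 (congrArg (·.1) (hc i hi))
  · exact wireCode_injective (wf_lt hi).2 (wf_lt hi).2 (congrArg (·.2.1) (hc i hi))

theorem read_eq_of_code_eq {s : ℕ} {c₁ c₂ : Circuit α} {out₁ out₂ : α ⊕ ℕ}
    (hout₁ : ∀ h, out₁ = Sum.inr h → h < s) (hout₂ : ∀ h, out₂ = Sum.inr h → h < s)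
    (hc : ∀ i < s, gateCode s c₁ i = gateCode s c₂ i)
    (he : wireCode s out₁ = wireCode s out₂) (x : α → Bool) :
    c₁.read x out₁ = c₂.read x out₂ := by
  obtain rfl := wireCode_injective hout₁ hout₂ he
  rcases out₁ with a | h
  · rfl
  · exact val_eq_of_gateCode_eq c₁ c₂ x hc h (hout₁ h rfl)

theorem card_functionsOfSizeLE_le [Finite α] (s : ℕ) :
    Nat.card (functionsOfSizeLE α s) ≤
      ((Nat.card α + s + 1) ^ 2 * 16) ^ s * (Nat.card α + s + 1) := by
  have hmem (f : functionsOfSizeLE α s) := f.2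
  choose c out hout hf using hmem
  let code (f : functionsOfSizeLE α s) :=
    ((fun i : Fin s => gateCode s (c f) i), wireCode s (out f))
  have hcode : Function.Injective code := by
    intro f₁ f₂ he
    simp only [code, Prod.mk.injEq, funext_iff] at he
    apply Subtype.ext
    rw [hf f₁, hf f₂]
    funext x
    exact read_eq_of_code_eq (hout f₁) (hout f₂) (fun i hi => he.1 ⟨i, hi⟩) he.2 x
  refine (Nat.card_le_card_of_injective code hcode).trans_eq ?_
  simp only [Nat.card_prod, Nat.card_fun, Nat.card_sum, Nat.card_eq_fintype_card (α := Bool),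
    Fintype.card_bool, Nat.card_eq_fintype_card (α := Fin _), Fintype.card_fin]
  ring

end Circuit

theorem card_split_compositions_le {X Y ι κ : Type} [Finite X] [Finite Y] [Finite ι]
    [Finite κ] (F : Set ((ι ⊕ κ → Bool) → Bool)) :
    Nat.card {g : (X ⊕ Y → Bool) → Bool | ∃ (A : (X → Bool) → ι → Bool)
        (B : (Y → Bool) → κ → Bool), ∃ f ∈ F,
          ∀ z, g z = f (Sum.elim (A (z ∘ Sum.inl)) (B (z ∘ Sum.inr)))} ≤
      2 ^ (Nat.card ι * 2 ^ Nat.card X) * 2 ^ (Nat.card κ * 2 ^ Nat.card Y) *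
        Nat.card F := by
  let compose (p : ((X → Bool) → ι → Bool) × ((Y → Bool) → κ → Bool) × F) :
      (X ⊕ Y → Bool) → Bool :=
    fun z => p.2.2.1 (Sum.elim (p.1 (z ∘ Sum.inl)) (p.2.1 (z ∘ Sum.inr)))
  calc _ ≤ Nat.card (Set.range compose) := by
        refine Nat.card_mono (Set.toFinite _) ?_
        rintro g ⟨A, B, f, hf, hg⟩
        exact ⟨(A, B, ⟨f, hf⟩), funext fun z => (hg z).symm⟩
    _ ≤ Nat.card (((X → Bool) → ι → Bool) × ((Y → Bool) → κ → Bool) × F) :=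
        Finite.card_range_le compose
    _ = _ := by
        simp only [Nat.card_prod, Nat.card_fun, Nat.card_eq_fintype_card (α := Bool),
          Fintype.card_bool, ← pow_mul, mul_assoc]

theorem four_mul_add_one_le_two_pow_log (l : ℕ) :
    l + l + 2 * l + 1 ≤ 2 ^ (Nat.log 2 l + 3) := by
  have := Nat.lt_pow_succ_log_self one_lt_two l
  rw [pow_add, pow_succ] at *
  omega

theorem card_bound_le_two_pow (m l : ℕ) (hl : 1 ≤ l) :
    2 ^ (l * 2 ^ m) * 2 ^ (l * 2 ^ m) *
        (((l + l + 2 * l + 1) ^ 2 * 16) ^ (2 * l) * (l + l + 2 * l + 1)) ≤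
      2 ^ (25 * (l * 2 ^ m + l * Nat.log 2 l)) := by
  set L := Nat.log 2 l
  have hN := four_mul_add_one_le_two_pow_log l
  calc _ ≤ 2 ^ (l * 2 ^ m) * 2 ^ (l * 2 ^ m) *
        (((2 ^ (L + 3)) ^ 2 * 2 ^ 4) ^ (2 * l) * 2 ^ (L + 3)) := by gcongr; norm_num
    _ = 2 ^ (2 * (l * 2 ^ m) + (2 * L + 10) * (2 * l) + (L + 3)) := by
        simp only [← pow_mul, ← pow_add]
        ring_nf
    _ ≤ 2 ^ (25 * (l * 2 ^ m + l * L)) := by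
        have : l ≤ l * 2 ^ m := Nat.le_mul_of_pos_right l (by positivity)
        have : L ≤ l * L := Nat.le_mul_of_pos_left L hl
        gcongr
        · norm_num
        · nlinarith

/-- For `n = 2m` even and `ℓ ≥ 1`, the number of distinct functions
`g : {0,1}^n → {0,1}` expressible as `g(z_L, z_R) = C(A(z_L), B(z_R))` for some
`A, B : {0,1}^{n/2} → {0,1}^ℓ` and some circuit `C` of size at most `2ℓ` on `2ℓ`
inputs is at most `2^{O(ℓ·2^{n/2} + ℓ·log ℓ)}`; consequently, if `ℓ = o(2^{n/2}/n)`
then most Boolean functions on `n` bits (i.e. most bitwise-XOR combined functions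
`f(x,y) = g(x ⊕ y)`) are not of this form. -/
theorem stmt7 :
    ∃ K : ℕ, ∀ (m l : ℕ), 1 ≤ l →
      Nat.card {g : (Fin m ⊕ Fin m → Bool) → Bool //
        ∃ (A B : (Fin m → Bool) → Fin l → Bool) (c : Circuit (Fin l ⊕ Fin l))
          (out : (Fin l ⊕ Fin l) ⊕ ℕ),
          c.size ≤ 2 * l ∧ (∀ h, out = Sum.inr h → h < c.size) ∧
          ∀ z : Fin m ⊕ Fin m → Bool,
            g z = c.read (Sum.elim (A (z ∘ Sum.inl)) (B (z ∘ Sum.inr))) out} ≤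
      2 ^ (K * (l * 2 ^ m + l * Nat.log 2 l)) := by
  refine ⟨25, fun m l hl => ?_⟩
  have hsplit := card_split_compositions_le (X := Fin m) (Y := Fin m)
    (Circuit.functionsOfSizeLE (Fin l ⊕ Fin l) (2 * l))
  have hcircuits := Circuit.card_functionsOfSizeLE_le (α := Fin l ⊕ Fin l) (2 * l)
  simp only [Nat.card_sum, Nat.card_fin] at hsplit hcircuits
  calc _ ≤ 2 ^ (l * 2 ^ m) * 2 ^ (l * 2 ^ m) *
          Nat.card (Circuit.functionsOfSizeLE (Fin l ⊕ Fin l) (2 * l)) := by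
        refine le_trans (Nat.card_mono (Set.toFinite _) ?_) hsplit
        rintro g ⟨A, B, c, out, hsize, hout, hg⟩
        exact ⟨A, B, _, ⟨c, out, fun h e => (hout h e).trans_le hsize, rfl⟩, hg⟩
    _ ≤ _ := by grw [hcircuits]
    _ ≤ _ := card_bound_le_two_pow m l hl
end

section
/- Let g : {0,1}^n → {0,1} be a monotone function representable by a monotone DNF of width at most w (every term has at most w variables). Then there exist maps A, B : {0,1}^n → {0,1}^{O(C(n,≤⌊w/2⌋))} and a DNF C of size O(C(n,≤⌊w/2⌋)) such that g(x ∨ y) = C(A(x), B(y)) for all x, y ∈ {0,1}^n, where x ∨ y denotes bitwise OR and C(n,≤k) = Σ_{i=0}^k binom(n,i). -/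
set_option maxHeartbeats 1000000


/-- There is a constant `K` such that: if a monotone
`g : {0,1}^n → {0,1}` is representable by a monotone DNF of width at most `w`,
then there are maps `A, B : {0,1}^n → {0,1}^k` with
`k = O(C(n, ≤⌊w/2⌋))` and a (monotone) DNF `C` with `O(C(n, ≤⌊w/2⌋))` terms over
the `2k` bits `(A(x), B(y))` such that `g(x ∨ y) = C(A(x), B(y))` for all `x, y`,
where `x ∨ y` is bitwise OR and `C(n,≤j) = Σ_{i=0}^{j} binom(n,i)`. -/
theorem stmt9 :
    ∃ K : ℕ, ∀ (n w : ℕ) (g : (Fin n → Bool) → Bool)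
      (t : ℕ) (S : Fin t → Finset (Fin n)),
      (∀ i, (S i).card ≤ w) →
      (∀ z, g z = decide (∃ i, ∀ j ∈ S i, z j = true)) →
      ∃ (k : ℕ) (A B : (Fin n → Bool) → Fin k → Bool)
        (mT : ℕ) (T : Fin mT → Finset (Fin k ⊕ Fin k)),
        k ≤ K * ∑ i ∈ Finset.range (w / 2 + 1), n.choose i ∧
        mT ≤ K * ∑ i ∈ Finset.range (w / 2 + 1), n.choose i ∧
        ∀ x y : Fin n → Bool,
          g (fun j => x j || y j) =
            decide (∃ i, ∀ v ∈ T i, Sum.elim (A x) (B y) v = true) := by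
  classical
  refine ⟨2, ?_⟩
  intro n w g t S hw hg
  set m := w / 2 with hm
  set U : Finset (Finset (Fin n)) := Finset.univ.filter (fun T => T.card ≤ m) with hU
  set N := U.card with hN
  let e : U ≃ Fin N := U.equivFin
  let mon : (Fin n → Bool) → Fin N → Bool := fun x j =>
    decide (∀ a ∈ (e.symm j : Finset (Fin n)), x a = true)
  let aux : (Fin n → Bool) → Fin N → Bool := fun x j =>
    decide (∃ i : Fin t, (e.symm j : Finset (Fin n)) ⊆ S i ∧
      ∀ a ∈ S i \ (e.symm j : Finset (Fin n)), x a = true)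
  let AB : (Fin n → Bool) → Fin (N + N) → Bool := fun x i =>
    Sum.elim (mon x) (aux x) (finSumFinEquiv.symm i)
  have hNle : N ≤ ∑ i ∈ Finset.range (m + 1), n.choose i := by
    have hsub : U ⊆ (Finset.range (m + 1)).biUnion
        (fun i => Finset.univ.powersetCard i) := by
      intro T hT
      simp only [hU, Finset.mem_filter, Finset.mem_univ, true_and] at hT
      refine Finset.mem_biUnion.mpr ⟨T.card, ?_, ?_⟩
      · exact Finset.mem_range.mpr (by omega)
      · simp [Finset.mem_powersetCard]
    calc N ≤ ((Finset.range (m + 1)).biUnion (fun i => Finset.univ.powersetCard i)).card :=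
          Finset.card_le_card hsub
      _ ≤ ∑ i ∈ Finset.range (m + 1), (Finset.univ.powersetCard i : Finset (Finset (Fin n))).card :=
          Finset.card_biUnion_le
      _ = ∑ i ∈ Finset.range (m + 1), n.choose i := by
          refine Finset.sum_congr rfl fun i _ => ?_
          simp [Finset.card_powersetCard]
  refine ⟨N + N, AB, AB, N + N,
    fun i => Sum.elim
      (fun j => {Sum.inl (finSumFinEquiv (Sum.inl j)), Sum.inr (finSumFinEquiv (Sum.inr j))})
      (fun j => {Sum.inr (finSumFinEquiv (Sum.inl j)), Sum.inl (finSumFinEquiv (Sum.inr j))})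
      (finSumFinEquiv.symm i),
    by omega, by omega, ?_⟩
  intro x y
  rw [hg, decide_eq_decide]
  constructor
  · rintro ⟨i, hi⟩
    set Tx : Finset (Fin n) := (S i).filter (fun j => x j = false) with hTx
    set Tx' : Finset (Fin n) := (S i).filter (fun j => ¬ (x j = false)) with hTx'
    have hcards : Tx.card + Tx'.card = (S i).card :=
      Finset.card_filter_add_card_filter_not _
    by_cases hc : Tx.card ≤ m
    · have hmem : Tx ∈ U := by simp [hU, hc]
      set j0 := e ⟨Tx, hmem⟩ with hj0
      have hsymm : (e.symm j0 : Finset (Fin n)) = Tx := by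
        simp [hj0]
      refine ⟨finSumFinEquiv (Sum.inr j0), ?_⟩
      intro v hv
      simp only [Equiv.symm_apply_apply, Sum.elim_inr, Finset.mem_insert,
        Finset.mem_singleton] at hv
      rcases hv with rfl | rfl
      · -- B y at monomial bit of Tx : y covers Tx
        simp only [Sum.elim_inr, AB, Equiv.symm_apply_apply, Sum.elim_inl, mon,
          decide_eq_true_eq, hsymm]
        intro a ha
        have hx : x a = false := (Finset.mem_filter.mp ha).2
        have := hi a (Finset.mem_filter.mp ha).1
        simpa [hx] using this
      · -- A x at aux bit of Tx : x covers S i \ Tx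
        simp only [Sum.elim_inl, AB, Equiv.symm_apply_apply, Sum.elim_inr, aux,
          decide_eq_true_eq, hsymm]
        refine ⟨i, Finset.filter_subset _ _, ?_⟩
        intro a ha
        rcases Finset.mem_sdiff.mp ha with ⟨haS, haT⟩
        have : ¬ (x a = false) := fun h => haT (Finset.mem_filter.mpr ⟨haS, h⟩)
        simpa using this
    · have hc' : Tx'.card ≤ m := by
        have := hw i
        omega
      have hmem : Tx' ∈ U := by simp [hU, hc']
      set j0 := e ⟨Tx', hmem⟩ with hj0
      have hsymm : (e.symm j0 : Finset (Fin n)) = Tx' := by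
        simp [hj0]
      refine ⟨finSumFinEquiv (Sum.inl j0), ?_⟩
      intro v hv
      simp only [Equiv.symm_apply_apply, Sum.elim_inl, Finset.mem_insert,
        Finset.mem_singleton] at hv
      rcases hv with rfl | rfl
      · -- A x at monomial bit of Tx' : x covers Tx'
        simp only [Sum.elim_inl, AB, Equiv.symm_apply_apply, mon,
          decide_eq_true_eq, hsymm]
        intro a ha
        have := (Finset.mem_filter.mp ha).2
        simpa using this
      · -- B y at aux bit of Tx' : y covers S i \ Tx'
        simp only [Sum.elim_inr, AB, Equiv.symm_apply_apply, aux,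
          decide_eq_true_eq, hsymm]
        refine ⟨i, Finset.filter_subset _ _, ?_⟩
        intro a ha
        rcases Finset.mem_sdiff.mp ha with ⟨haS, haT⟩
        have hx : x a = false := by
          by_contra h
          exact haT (Finset.mem_filter.mpr ⟨haS, h⟩)
        have := hi a haS
        simpa [hx] using this
  · rintro ⟨i, hv⟩
    rcases h : finSumFinEquiv.symm i with j | j <;> simp only [h] at hv
    · -- term {inl mon j, inr aux j} : x covers e.symm j, y covers some S i' \ e.symm j
      have h1 := hv _ (Finset.mem_insert_self _ _)
      have h2 := hv _ (Finset.mem_insert_of_mem (Finset.mem_singleton_self _))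
      simp only [Sum.elim_inl, Sum.elim_inr, AB, Equiv.symm_apply_apply, mon, aux,
        decide_eq_true_eq] at h1 h2
      obtain ⟨i', hsub, hcov⟩ := h2
      refine ⟨i', fun a ha => ?_⟩
      by_cases haT : a ∈ (e.symm j : Finset (Fin n))
      · simp [h1 a haT]
      · simp [hcov a (Finset.mem_sdiff.mpr ⟨ha, haT⟩)]
    · have h1 := hv _ (Finset.mem_insert_self _ _)
      have h2 := hv _ (Finset.mem_insert_of_mem (Finset.mem_singleton_self _))
      simp only [Sum.elim_inl, Sum.elim_inr, AB, Equiv.symm_apply_apply, mon, aux,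
        decide_eq_true_eq] at h1 h2
      obtain ⟨i', hsub, hcov⟩ := h2
      refine ⟨i', fun a ha => ?_⟩
      by_cases haT : a ∈ (e.symm j : Finset (Fin n))
      · simp [h1 a haT]
      · simp [hcov a (Finset.mem_sdiff.mpr ⟨ha, haT⟩)]
end

section
/- A Boolean function g : {0,1}^n → {0,1} has alternation at most k if and only if there exist k monotone functions g_1, …, g_k : {0,1}^n → {0,1} such that g(x) = g(0^n) ⊕ g_1(x) ⊕ ⋯ ⊕ g_k(x) for all x. -/
/-!
A monotone Boolean function changes value at most once along a chain, and when `g` is determined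
by `g_1, …, g_k`, every change of `g` forces a change of some `g_i`; so `g` alternates at most `k`
times. Conversely, let `A(x)` be the largest number of value changes of `g` along a monotone
sequence from `0^n` to `x`. Every such sequence is a subsequence of a maximal chain, so `A ≤ k`;
appending a step shows that `A` is monotone; and the number of changes along any sequence from
`0^n` to `x` has the parity of `g(0^n) ⊕ g(x)`. Hence `g_i(x) = [i < A(x)]` works.
-/

open Finset

section Alternations

variable {β : Type*} [DecidableEq β]

def alternations (u : ℕ → β) (m : ℕ) : ℕ := #{j ∈ range m | u j ≠ u (j + 1)}

lemma alternations_add_one (u : ℕ → β) (m : ℕ) :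
    alternations u (m + 1) = alternations u m + if u m ≠ u (m + 1) then 1 else 0 := by
  unfold alternations
  rw [range_add_one, filter_insert]
  split_ifs
  · rw [card_insert_of_notMem (by simp)]
  · rfl

lemma alternations_congr {u u' : ℕ → β} {m : ℕ} (h : ∀ j ≤ m, u j = u' j) :
    alternations u m = alternations u' m := by
  unfold alternations
  congr 1
  refine filter_congr fun j hj => ?_
  rw [mem_range] at hj
  rw [h j hj.le, h (j + 1) hj]

lemma alternations_mono (u : ℕ → β) : Monotone (alternations u) :=
  fun _ _ hab => card_le_card (filter_subset_filter _ (range_mono hab))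

lemma alternations_add_ite_le {u : ℕ → β} {a b : ℕ} (hab : a ≤ b) :
    alternations u a + (if u a ≠ u b then 1 else 0) ≤ alternations u b := by
  induction b, hab using Nat.le_induction with
  | base => simp
  | succ b hab ih =>
    rw [alternations_add_one]
    by_cases hb : u a = u b
    · by_cases hb' : u b = u (b + 1) <;> simp_all
    · have := alternations_mono u hab
      split_ifs at ih ⊢ <;> omega

lemma alternations_comp_le (u : ℕ → β) {s : ℕ → ℕ} (hs : Monotone s) (m : ℕ) :
    alternations (u ∘ s) m ≤ alternations u (s m) := by
  induction m with
  | zero => simp [alternations]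
  | succ m ih =>
    rw [alternations_add_one]
    exact (Nat.add_le_add_right ih _).trans (alternations_add_ite_le (hs m.le_succ))

lemma alternations_le_one_of_monotone {u : ℕ → Bool} (hu : Monotone u) (m : ℕ) :
    alternations u m ≤ 1 := by
  have step : ∀ j, u j ≠ u (j + 1) → u j = false ∧ u (j + 1) = true := fun j hj => by
    have := hu j.le_succ
    revert hj this; cases u j <;> cases u (j + 1) <;> decide
  refine card_le_one.2 fun a ha b hb => ?_
  simp only [mem_filter] at ha hb
  by_contra hne
  wlog hlt : a < b generalizing a b
  · exact this b a hb ha (Ne.symm hne) (by omega)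
  have := hu (show a + 1 ≤ b by omega)
  rw [(step a ha.2).2, (step b hb.2).1] at this
  exact absurd this (by decide)

lemma alternations_le_sum {ι : Type*} [Fintype ι] {γ : Type*} [DecidableEq γ] {u : ℕ → β}
    {v : ι → ℕ → γ} (h : ∀ j, u j ≠ u (j + 1) → ∃ i, v i j ≠ v i (j + 1)) (m : ℕ) :
    alternations u m ≤ ∑ i, alternations (v i) m := by
  refine (card_le_card fun j hj => ?_).trans card_biUnion_le
  simp only [mem_filter, mem_biUnion, mem_univ, true_and] at hj ⊢
  obtain ⟨i, hi⟩ := h j hj.2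
  exact ⟨i, hj.1, hi⟩

lemma ite_add_alternations (u : ℕ → Bool) (m : ℕ) :
    (if u 0 then (1 : ZMod 2) else 0) + alternations u m = if u m then 1 else 0 := by
  induction m with
  | zero => simp [alternations]
  | succ m ih =>
    rw [alternations_add_one, Nat.cast_add, ← add_assoc, ih]
    cases u m <;> cases u (m + 1) <;> decide

end Alternations

section Decomposition

variable {α : Type*} [Preorder α]

def HasAlternationAtMost {β : Type*} [DecidableEq β] (g : α → β) (k : ℕ) : Prop :=
  ∀ c : ℕ → α, Monotone c → ∀ m, alternations (g ∘ c) m ≤ k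

theorem hasAlternationAtMost_of_monotone_determined {β : Type*} [DecidableEq β] {k : ℕ}
    (gs : Fin k → α → Bool) (hgs : ∀ i, Monotone (gs i)) (g : α → β)
    (hg : ∀ x y, (∀ i, gs i x = gs i y) → g x = g y) : HasAlternationAtMost g k := by
  intro c hc m
  have hchange : ∀ j, g (c j) ≠ g (c (j + 1)) → ∃ i, gs i (c j) ≠ gs i (c (j + 1)) := by
    intro j hj
    by_contra! h
    exact hj (hg _ _ h)
  calc alternations (g ∘ c) m ≤ ∑ i, alternations (gs i ∘ c) m := alternations_le_sum hchange m
    _ ≤ ∑ _i : Fin k, 1 :=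
      sum_le_sum fun i _ => alternations_le_one_of_monotone ((hgs i).comp hc) m
    _ = k := by simp

variable [OrderBot α]

def alternationValues (g : α → Bool) (x : α) : Set ℕ :=
  {a | ∃ c : ℕ → α, ∃ m, Monotone c ∧ c 0 = ⊥ ∧ c m = x ∧ alternations (g ∘ c) m = a}

noncomputable def maxAlternations (g : α → Bool) (x : α) : ℕ := sSup (alternationValues g x)

variable {g : α → Bool} {k : ℕ}

lemma alternationValues_nonempty (g : α → Bool) (x : α) : (alternationValues g x).Nonempty := by
  refine ⟨_, fun j => if j = 0 then ⊥ else x, 1, fun i j hij => ?_, rfl, rfl, rfl⟩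
  by_cases hi : i = 0
  · simp [hi]
  · simp [hi, show j ≠ 0 by omega]

lemma alternationValues_bddAbove (hk : HasAlternationAtMost g k) (x : α) :
    BddAbove (alternationValues g x) :=
  ⟨k, by rintro _ ⟨c, m, hc, -, -, rfl⟩; exact hk c hc m⟩

lemma maxAlternations_mem (hk : HasAlternationAtMost g k) (x : α) :
    maxAlternations g x ∈ alternationValues g x :=
  Nat.sSup_mem (alternationValues_nonempty g x) (alternationValues_bddAbove hk x)

lemma maxAlternations_le (hk : HasAlternationAtMost g k) (x : α) :
    maxAlternations g x ≤ k := by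
  obtain ⟨c, m, hc, -, -, hcm⟩ := maxAlternations_mem hk x
  exact hcm ▸ hk c hc m

lemma ite_add_maxAlternations (hk : HasAlternationAtMost g k) (x : α) :
    (if g ⊥ then (1 : ZMod 2) else 0) + maxAlternations g x = if g x then 1 else 0 := by
  obtain ⟨c, m, -, hc0, hcm, hmax⟩ := maxAlternations_mem hk x
  rw [← hmax, ← hc0, ← hcm]
  exact ite_add_alternations (g ∘ c) m

lemma monotone_maxAlternations (hk : HasAlternationAtMost g k) :
    Monotone (maxAlternations g) := by
  intro x y hxy
  refine csSup_le (alternationValues_nonempty g x) ?_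
  rintro _ ⟨c, m, hc, hc0, hcm, rfl⟩
  set c' : ℕ → α := fun j => if j ≤ m then c j else y
  have hc' : Monotone c' := by
    intro i j hij
    simp only [c']
    split_ifs <;> first | omega | exact hc hij | exact (hc (by omega)).trans (hcm ▸ hxy) | rfl
  calc alternations (g ∘ c) m = alternations (g ∘ c') m :=
        alternations_congr fun j hj => by simp [c', hj]
    _ ≤ alternations (g ∘ c') (m + 1) := alternations_mono _ m.le_succ
    _ ≤ maxAlternations g y :=
        le_csSup (alternationValues_bddAbove hk y)
          ⟨c', m + 1, hc', by simp [c', hc0], by simp [c'], rfl⟩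

lemma sum_fin_ite_lt {R : Type*} [AddCommMonoidWithOne R] {a k : ℕ} (h : a ≤ k) :
    ∑ i : Fin k, (if (i : ℕ) < a then (1 : R) else 0) = a := by
  have hfilter : {i ∈ range k | i < a} = range a := by
    ext i
    simp only [mem_filter, mem_range]
    omega
  rw [Fin.sum_univ_eq_sum_range (fun i => if i < a then (1 : R) else 0), sum_boole, hfilter,
    card_range]

theorem exists_monotone_decomposition (hk : HasAlternationAtMost g k) :
    ∃ gs : Fin k → α → Bool, (∀ i, Monotone (gs i)) ∧
      ∀ x, (if g x then (1 : ZMod 2) else 0) =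
        (if g ⊥ then (1 : ZMod 2) else 0) + ∑ i, (if gs i x then (1 : ZMod 2) else 0) := by
  refine ⟨fun i x => decide ((i : ℕ) < maxAlternations g x), fun i x y hxy => ?_, fun x => ?_⟩
  · simpa [Bool.le_iff_imp] using fun h => h.trans_le (monotone_maxAlternations hk hxy)
  · simp only [decide_eq_true_eq]
    rw [sum_fin_ite_lt (maxAlternations_le hk x), ite_add_maxAlternations hk]

end Decomposition

section Cube

variable {n : ℕ}

def permChain (π : Equiv.Perm (Fin n)) (j : ℕ) : Fin n → Bool := fun v => decide ((π v : ℕ) < j)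

lemma monotone_permChain (π : Equiv.Perm (Fin n)) : Monotone (permChain π) := by
  intro i j hij v
  simpa [permChain, Bool.le_iff_imp] using fun h => h.trans_le hij

lemma exists_perm_lt_card_iff {α : Type*} [LinearOrder α] (r : Fin n → α) :
    ∃ π : Equiv.Perm (Fin n), ∀ v a, (π v : ℕ) < #{u | r u ≤ a} ↔ r v ≤ a := by
  refine ⟨(Tuple.sort r)⁻¹, fun v a => ?_⟩
  have hcard : #{u | r u ≤ a} = #{i | (r ∘ Tuple.sort r) i ≤ a} :=
    (card_equiv (Tuple.sort r) fun i => by simp).symm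
  rw [hcard, Tuple.lt_card_le_iff_apply_le_of_monotone (Tuple.monotone_sort r)]
  simp

-- Sorting the coordinates by the step at which they enter the chain.
lemma exists_perm_permChain_eq {c : ℕ → Fin n → Bool} (hc : Monotone c) (m : ℕ) :
    ∃ π : Equiv.Perm (Fin n), ∀ j ≤ m, permChain π #{v | c j v = true} = c j := by
  have hex : ∀ v, ∃ i, c i v = true ∨ i = m + 1 := fun v => ⟨m + 1, Or.inr rfl⟩
  have hentry : ∀ v, ∀ j ≤ m, Nat.find (hex v) ≤ j ↔ c j v = true := by
    intro v j hj
    rw [Nat.find_le_iff]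
    constructor
    · rintro ⟨i, hij, hi | rfl⟩
      · exact Bool.le_iff_imp.1 (hc hij v) hi
      · omega
    · exact fun h => ⟨j, le_rfl, Or.inl h⟩
  obtain ⟨π, hπ⟩ := exists_perm_lt_card_iff fun v => Nat.find (hex v)
  refine ⟨π, fun j hj => funext fun v => ?_⟩
  have hcard : #{u | Nat.find (hex u) ≤ j} = #{u | c j u = true} :=
    congrArg card (filter_congr fun u _ => hentry u j hj)
  simp only [permChain, ← hcard, hπ, hentry v j hj, Bool.decide_eq_true]

lemma exists_alternations_le_permChain {β : Type*} [DecidableEq β] (g : (Fin n → Bool) → β)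
    {c : ℕ → Fin n → Bool} (hc : Monotone c) (m : ℕ) :
    ∃ π : Equiv.Perm (Fin n), alternations (g ∘ c) m ≤ alternations (g ∘ permChain π) n := by
  obtain ⟨π, hπ⟩ := exists_perm_permChain_eq hc m
  set s : ℕ → ℕ := fun j => #{v | c j v = true}
  have hs : Monotone s := fun i j hij =>
    card_le_card (monotone_filter_right _ fun v _ h => Bool.le_iff_imp.1 (hc hij v) h)
  refine ⟨π, ?_⟩
  calc alternations (g ∘ c) m = alternations ((g ∘ permChain π) ∘ s) m :=
        alternations_congr fun j hj => by simp [s, hπ j hj]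
    _ ≤ alternations (g ∘ permChain π) (s m) := alternations_comp_le _ hs m
    _ ≤ alternations (g ∘ permChain π) n :=
        alternations_mono _ ((card_le_univ _).trans_eq (Fintype.card_fin n))

lemma hasAlternationAtMost_iff_permChain {β : Type*} [DecidableEq β]
    (g : (Fin n → Bool) → β) (k : ℕ) :
    HasAlternationAtMost g k ↔ ∀ π : Equiv.Perm (Fin n), alternations (g ∘ permChain π) n ≤ k := by
  refine ⟨fun hk π => hk _ (monotone_permChain π) n, fun hk c hc m => ?_⟩
  obtain ⟨π, hπ⟩ := exists_alternations_le_permChain g hc m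
  exact hπ.trans (hk π)

lemma monotone_iff_forall_imp (f : (Fin n → Bool) → Bool) :
    Monotone f ↔ ∀ x y : Fin n → Bool, (∀ v, x v = true → y v = true) →
      f x = true → f y = true := by
  simp only [Monotone, Pi.le_def, Bool.le_iff_imp]

end Cube

/-- A Boolean function `g : {0,1}^n → {0,1}` has alternation at most
`k` (along every maximal chain from `0^n` to `1^n`, here parametrized by
permutations `π` of the coordinates, the value of `g` changes at most `k` times)
iff there exist `k` monotone functions `g_1, …, g_k` with
`g(x) = g(0^n) ⊕ g_1(x) ⊕ ⋯ ⊕ g_k(x)` for all `x` (xor computed in `F_2`). -/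
theorem stmt11 (n k : ℕ) (g : (Fin n → Bool) → Bool) :
    (∀ π : Equiv.Perm (Fin n),
      ((Finset.range n).filter (fun j =>
          g (fun v => decide ((π v : ℕ) < j)) ≠
          g (fun v => decide ((π v : ℕ) < j + 1)))).card ≤ k) ↔
    (∃ gs : Fin k → (Fin n → Bool) → Bool,
      (∀ i, ∀ x y : Fin n → Bool, (∀ v, x v = true → y v = true) →
        gs i x = true → gs i y = true) ∧
      (∀ x, (if g x then (1 : ZMod 2) else 0) =
        (if g (fun _ => false) then (1 : ZMod 2) else 0) +
          ∑ i, (if gs i x then (1 : ZMod 2) else 0))) := by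
  constructor
  · intro H
    obtain ⟨gs, hgs, hdecomp⟩ :=
      exists_monotone_decomposition ((hasAlternationAtMost_iff_permChain g k).2 H)
    exact ⟨gs, fun i => (monotone_iff_forall_imp _).1 (hgs i), hdecomp⟩
  · rintro ⟨gs, hgs, hdecomp⟩
    refine (hasAlternationAtMost_iff_permChain g k).1 <|
      hasAlternationAtMost_of_monotone_determined gs
        (fun i => (monotone_iff_forall_imp _).2 (hgs i)) g fun x y hxy => ?_
    have hbit : (if g x then (1 : ZMod 2) else 0) = if g y then 1 else 0 := by
      rw [hdecomp x, hdecomp y, sum_congr rfl fun i _ => by rw [hxy i]]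
    revert hbit
    cases g x <;> cases g y <;> decide
end

section
/- For every n and every 0 ≤ r ≤ n, there exists a set of m codewords c_1, …, c_m ∈ {0,1}^n with m = O(n · 2^n / C(n,≤r)) such that every x ∈ {0,1}^n is within Hamming distance r of some c_i (an (m,r)-covering code of length n), where C(n,≤r) = Σ_{i=0}^r binom(n,i). -/
open Finset

private lemma sphere_card (n i : ℕ) (c : Fin n → Bool) :
    (Finset.univ.filter (fun x : Fin n → Bool => hammingDist c x = i)).card = n.choose i := by
  have hpc : (Finset.powersetCard i (Finset.univ : Finset (Fin n))).card = n.choose i := by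
    simp
  rw [← hpc]
  apply Finset.card_bij (fun x _ => Finset.univ.filter (fun j => c j ≠ x j))
  · intro x hx
    simp only [Finset.mem_filter, Finset.mem_univ, true_and] at hx
    simpa [Finset.mem_powersetCard, hammingDist] using hx
  · intro x hx y hy h
    simp only [Finset.mem_filter, Finset.mem_univ, true_and] at hx hy
    funext j
    have := Finset.ext_iff.mp h j
    simp only [Finset.mem_filter, Finset.mem_univ, true_and] at this
    cases hc : c j <;> cases hx' : x j <;> cases hy' : y j <;> simp_all
  · intro s hs
    simp only [Finset.mem_powersetCard] at hs
    refine ⟨fun j => if j ∈ s then !(c j) else c j, ?_, ?_⟩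
    · simp only [Finset.mem_filter, Finset.mem_univ, true_and, hammingDist]
      rw [← hs.2]
      congr 1
      ext j
      by_cases hj : j ∈ s <;> simp [hj]
    · ext j
      by_cases hj : j ∈ s <;> simp [hj]

private lemma ball_card (n r : ℕ) (c : Fin n → Bool) :
    (Finset.univ.filter (fun x : Fin n → Bool => hammingDist c x ≤ r)).card
      = ∑ i ∈ Finset.range (r + 1), n.choose i := by
  rw [Finset.card_eq_sum_card_fiberwise
    (f := fun x => hammingDist c x) (t := Finset.range (r + 1))
    (fun x hx => by simpa [Finset.mem_range, Nat.lt_succ_iff] using (Finset.mem_filter.mp hx).2)]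
  refine Finset.sum_congr rfl fun i hi => ?_
  rw [← sphere_card n i c]
  congr 1
  ext x
  simp only [Finset.mem_filter, Finset.mem_univ, true_and, Finset.mem_range, Nat.lt_succ_iff] at *
  omega

private lemma count_sum (n r : ℕ) (U : Finset (Fin n → Bool)) :
    ∑ c : Fin n → Bool, (U.filter (fun x => hammingDist c x ≤ r)).card
      = U.card * ∑ i ∈ Finset.range (r + 1), n.choose i := by
  simp_rw [Finset.card_filter]
  rw [Finset.sum_comm]
  have h : ∀ x : Fin n → Bool,
      (∑ c : Fin n → Bool, if hammingDist c x ≤ r then 1 else 0)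
        = ∑ i ∈ Finset.range (r + 1), n.choose i := by
    intro x
    rw [← ball_card n r x, Finset.card_filter]
    apply Finset.sum_congr rfl
    intro c _
    simp [hammingDist_comm]
  calc (∑ x ∈ U, ∑ c : Fin n → Bool, if hammingDist c x ≤ r then 1 else 0)
      = ∑ x ∈ U, ∑ i ∈ Finset.range (r + 1), n.choose i := by
        exact Finset.sum_congr rfl fun x _ => h x
    _ = U.card * ∑ i ∈ Finset.range (r + 1), n.choose i := by
        rw [Finset.sum_const, smul_eq_mul]

private lemma exists_good (n r : ℕ) (U : Finset (Fin n → Bool)) :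
    ∃ c : Fin n → Bool,
      U.card * (∑ i ∈ Finset.range (r + 1), n.choose i)
        ≤ (U.filter (fun x => hammingDist c x ≤ r)).card * 2 ^ n := by
  by_contra hcon
  push_neg at hcon
  have hcard : (Finset.univ : Finset (Fin n → Bool)).card = 2 ^ n := by
    simp [Finset.card_univ]
  have hlt : ∑ c : Fin n → Bool,
      (U.filter (fun x => hammingDist c x ≤ r)).card * 2 ^ n
      < ∑ _c : Fin n → Bool, U.card * (∑ i ∈ Finset.range (r + 1), n.choose i) := by
    apply Finset.sum_lt_sum_of_nonempty
    · exact Finset.univ_nonempty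
    · intro c _; exact hcon c
  rw [← Finset.sum_mul, count_sum, Finset.sum_const, hcard, smul_eq_mul] at hlt
  rw [mul_comm (2 ^ n)] at hlt
  exact lt_irrefl _ hlt

noncomputable def pick (n r : ℕ) (U : Finset (Fin n → Bool)) : Fin n → Bool :=
  (exists_good n r U).choose

private lemma pick_spec (n r : ℕ) (U : Finset (Fin n → Bool)) :
    U.card * (∑ i ∈ Finset.range (r + 1), n.choose i)
      ≤ (U.filter (fun x => hammingDist (pick n r U) x ≤ r)).card * 2 ^ n :=
  (exists_good n r U).choose_spec

noncomputable def Useq (n r : ℕ) : ℕ → Finset (Fin n → Bool)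
  | 0 => Finset.univ
  | t + 1 => (Useq n r t).filter (fun x => ¬ hammingDist (pick n r (Useq n r t)) x ≤ r)

private lemma Useq_card_step (n r : ℕ) (t : ℕ) :
    (Useq n r (t + 1)).card * 2 ^ n
      ≤ (Useq n r t).card * (2 ^ n - ∑ i ∈ Finset.range (r + 1), n.choose i) := by
  set U := Useq n r t
  set B := ∑ i ∈ Finset.range (r + 1), n.choose i
  set cov := (U.filter (fun x => hammingDist (pick n r U) x ≤ r)).card
  have hsplit : cov + (Useq n r (t + 1)).card = U.card := by
    show cov + (U.filter (fun x => ¬ hammingDist (pick n r U) x ≤ r)).card = U.card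
    exact Finset.card_filter_add_card_filter_not
      (s := U) (p := fun x => hammingDist (pick n r U) x ≤ r)
  have hspec : U.card * B ≤ cov * 2 ^ n := pick_spec n r U
  have h1 : (Useq n r (t + 1)).card = U.card - cov := by omega
  rw [h1, Nat.sub_mul, Nat.mul_sub]
  exact Nat.sub_le_sub_left hspec _

private lemma Useq_card_le (n r : ℕ) (m : ℕ) :
    (Useq n r m).card * (2 ^ n) ^ m
      ≤ 2 ^ n * (2 ^ n - ∑ i ∈ Finset.range (r + 1), n.choose i) ^ m := by
  induction m with
  | zero => simp [Useq, Finset.card_univ]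
  | succ t ih =>
    set B := ∑ i ∈ Finset.range (r + 1), n.choose i
    calc (Useq n r (t + 1)).card * (2 ^ n) ^ (t + 1)
        = ((Useq n r (t + 1)).card * 2 ^ n) * (2 ^ n) ^ t := by ring
      _ ≤ ((Useq n r t).card * (2 ^ n - B)) * (2 ^ n) ^ t :=
          Nat.mul_le_mul_right _ (Useq_card_step n r t)
      _ = ((Useq n r t).card * (2 ^ n) ^ t) * (2 ^ n - B) := by ring
      _ ≤ (2 ^ n * (2 ^ n - B) ^ t) * (2 ^ n - B) := Nat.mul_le_mul_right _ ih
      _ = 2 ^ n * (2 ^ n - B) ^ (t + 1) := by ring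

private lemma Useq_cover (n r : ℕ) (t : ℕ) (x : Fin n → Bool) (hx : x ∉ Useq n r t) :
    ∃ i < t, hammingDist (pick n r (Useq n r i)) x ≤ r := by
  induction t with
  | zero => simp [Useq] at hx
  | succ s ih =>
    by_cases hxs : x ∈ Useq n r s
    · refine ⟨s, Nat.lt_succ_self s, ?_⟩
      by_contra hd
      exact hx (Finset.mem_filter.mpr ⟨hxs, hd⟩)
    · obtain ⟨i, hi, hdi⟩ := ih hxs
      exact ⟨i, hi.trans (Nat.lt_succ_self s), hdi⟩

-- key real inequality
private lemma key_ineq (n B m : ℕ) (hn : 1 ≤ n) (hB1 : 1 ≤ B) (hBN : B ≤ 2 ^ n)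
    (hm : n * 2 ^ n < m * B) :
    2 ^ n * (2 ^ n - B) ^ m < (2 ^ n) ^ m := by
  have hN : (0:ℝ) < (2 ^ n : ℕ) := by positivity
  rw [← Nat.cast_lt (α := ℝ)]
  push_cast [Nat.cast_sub hBN]
  set N : ℝ := (2 : ℝ) ^ n with hNdef
  have hNpos : (0:ℝ) < N := by positivity
  have hBr : (0:ℝ) < (B:ℝ) := by exact_mod_cast hB1
  have hBle : (B:ℝ) ≤ N := by rw [hNdef]; exact_mod_cast hBN
  -- (N - B)^m ≤ (N * exp(-B/N))^m
  have h1 : N - (B:ℝ) ≤ N * Real.exp (-(B/N)) := by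
    have := Real.add_one_le_exp (-(B/N : ℝ))
    have h2 : 1 - (B:ℝ)/N ≤ Real.exp (-(B/N)) := by linarith
    calc N - (B:ℝ) = N * (1 - B/N) := by field_simp
      _ ≤ N * Real.exp (-(B/N)) := by
          apply mul_le_mul_of_nonneg_left h2 hNpos.le
  have hnn : (0:ℝ) ≤ N - B := by linarith
  have h3 : (N - (B:ℝ)) ^ m ≤ (N * Real.exp (-(B/N))) ^ m :=
    pow_le_pow_left₀ hnn h1 m
  have h4 : (N * Real.exp (-(B/N))) ^ m = N ^ m * Real.exp (-(m * B)/N) := by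
    rw [mul_pow, ← Real.exp_nat_mul]
    congr 2
    field_simp
  -- exp(-(m*B)/N) < exp(-n) since m*B > n*N
  have hmB : (n:ℝ) * N < (m:ℝ) * B := by
    rw [hNdef]; exact_mod_cast hm
  have h5 : Real.exp (-((m:ℝ) * B)/N) < Real.exp (-(n:ℝ)) := by
    apply Real.exp_lt_exp.mpr
    have hlt : (n:ℝ) < ((m:ℝ) * B)/N := by
      rw [lt_div_iff₀ hNpos]; linarith [hmB]
    rw [neg_div]
    exact neg_lt_neg hlt
  -- exp(-n) ≤ 1 / 2^n  strictly:  2^n < exp n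
  have h6 : Real.exp (-(n:ℝ)) < 1 / N := by
    rw [Real.exp_neg, hNdef, div_eq_inv_mul, mul_one]
    apply inv_strictAnti₀ (by positivity)
    calc (2:ℝ) ^ n < Real.exp 1 ^ n := by
          apply pow_lt_pow_left₀ _ (by norm_num) (by omega)
          have := Real.add_one_lt_exp (x := (1:ℝ)) (by norm_num)
          linarith
      _ = Real.exp n := by rw [← Real.exp_nat_mul]; ring_nf
  -- combine
  have hexp_pos : (0:ℝ) < Real.exp (-((m:ℝ) * B)/N) := Real.exp_pos _
  calc N * (N - (B:ℝ)) ^ m ≤ N * (N ^ m * Real.exp (-(m * B)/N)) := by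
        rw [← h4]; exact mul_le_mul_of_nonneg_left h3 hNpos.le
    _ < N * (N ^ m * (1 / N)) := by
        apply mul_lt_mul_of_pos_left _ hNpos
        apply mul_lt_mul_of_pos_left (h5.trans h6) (by positivity)
    _ = N ^ m := by field_simp

/-- For every `n ≥ 1` and `0 ≤ r ≤ n` there is an `(m,r)`-covering
code of length `n` with `m = O(n·2^n / C(n,≤r))` codewords, i.e. every point of
`{0,1}^n` is within Hamming distance `r` of some codeword, where
`C(n,≤r) = Σ_{i=0}^{r} binom(n,i)`. -/
theorem stmt12 :
    ∃ K : ℕ, 0 < K ∧ ∀ n r : ℕ, 1 ≤ n → r ≤ n →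
      ∃ (m : ℕ) (c : Fin m → Fin n → Bool),
        m * ∑ i ∈ Finset.range (r + 1), n.choose i ≤ K * n * 2 ^ n ∧
        ∀ x : Fin n → Bool, ∃ i, hammingDist (c i) x ≤ r := by
  refine ⟨2, by norm_num, ?_⟩
  intro n r hn hr
  set B := ∑ i ∈ Finset.range (r + 1), n.choose i with hB
  have hB1 : 1 ≤ B := by
    calc 1 = n.choose 0 := (Nat.choose_zero_right n).symm
      _ ≤ B := Finset.single_le_sum (f := fun i => n.choose i)
          (fun i _ => Nat.zero_le _) (by simp)
  have hBN : B ≤ 2 ^ n := by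
    rw [hB, ← ball_card n r (fun _ => false)]
    calc (Finset.univ.filter
          (fun x : Fin n → Bool => hammingDist (fun _ => false) x ≤ r)).card
        ≤ (Finset.univ : Finset (Fin n → Bool)).card := Finset.card_filter_le _ _
      _ = 2 ^ n := by simp
  set m := n * 2 ^ n / B + 1 with hm
  refine ⟨m, fun i => pick n r (Useq n r i), ?_, ?_⟩
  · have hdm : (n * 2 ^ n / B) * B ≤ n * 2 ^ n := Nat.div_mul_le_self _ _
    have hN : 2 ^ n ≤ n * 2 ^ n := Nat.le_mul_of_pos_left _ hn
    calc m * B = (n * 2 ^ n / B) * B + B := by rw [hm]; ring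
      _ ≤ n * 2 ^ n + 2 ^ n := add_le_add hdm hBN
      _ ≤ n * 2 ^ n + n * 2 ^ n := by omega
      _ = 2 * n * 2 ^ n := by ring
  · have hmB_lt : n * 2 ^ n < m * B := by
      have h0 := Nat.div_add_mod (n * 2 ^ n) B
      have h2 := Nat.mod_lt (n * 2 ^ n) hB1
      have h1 : m * B = B * (n * 2 ^ n / B) + B := by rw [hm]; ring
      omega
    have hzero : (Useq n r m).card = 0 := by
      by_contra hne
      have h1 : 1 ≤ (Useq n r m).card := Nat.pos_of_ne_zero hne
      have h2 : (2 ^ n) ^ m ≤ (Useq n r m).card * (2 ^ n) ^ m :=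
        Nat.le_mul_of_pos_left _ h1
      have h3 := (h2.trans (Useq_card_le n r m)).trans_lt
        (key_ineq n B m hn hB1 hBN hmB_lt)
      exact lt_irrefl _ h3
    intro x
    have hx : x ∉ Useq n r m := by
      rw [Finset.card_eq_zero.mp hzero]
      exact Finset.notMem_empty x
    obtain ⟨i, hi, hdi⟩ := Useq_cover n r m x hx
    exact ⟨⟨i, hi⟩, hdi⟩
end

section
/- Let L ⊆ {0,1}* × {0,1}* be recognized by a Turing machine M that halts exactly on members of L (L is recursively enumerable). Define, for inputs x and y: a_x = |{y' : |y'| ≤ |x| and (x,y') ∈ L}| and b_y = |{x' : |x'| ≤ |y| and (x',y) ∈ L}|. Then the following procedure decides membership of (x,y) in L and always halts: if |x| ≤ |y|, dovetail M on all inputs (x, y') with |y'| ≤ |x| until exactly a_x of them have accepted, and accept iff (x,y) is among them; otherwise proceed symmetrically using b_y. In particular, every recursively enumerable language over pairs is BSM-computable with messages of length 2n+1 (the input plus the count) and a Carol that halts on all message pairs arising from actual inputs. -/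
/-!
Let `g p n` say that the machine accepts `p` within `n` steps. The elements of a finite list `S`
accepted by stage `n` form a sublist of the members of `L` in `S`; so as soon as their number
reaches the exact count of members, which the messages supply, they are all of the members, and
`p ∈ S` lies in `L` iff it is accepted at that stage. If `|x| ≤ |y|` Carol runs this on the
candidates `(x', y)` with `|x'| ≤ |y|`, counted by `b_y`; otherwise on the `(x, y')` with
`|y'| ≤ |x|`, counted by `a_x`. Either way `(x, y)` itself is a candidate. There are
`2 ^ (m + 1) - 1` strings of length at most `m`, which bounds the counts.
-/

open Nat.Partrec (Code)

def boolListsUpTo : ℕ → List (List Bool)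
  | 0 => [[]]
  | n + 1 => [] :: (boolListsUpTo n).flatMap fun l => [true :: l, false :: l]

theorem mem_boolListsUpTo {m : ℕ} {l : List Bool} : l ∈ boolListsUpTo m ↔ l.length ≤ m := by
  induction m generalizing l with
  | zero => simp [boolListsUpTo]
  | succ m ih =>
    cases l with
    | nil => simp [boolListsUpTo]
    | cons b t => cases b <;> simp [boolListsUpTo, ih]

theorem nodup_boolListsUpTo (m : ℕ) : (boolListsUpTo m).Nodup := by
  induction m with
  | zero => simp [boolListsUpTo]
  | succ m ih =>
    refine .cons (by simp) (List.nodup_flatMap.2 ⟨fun _ _ => by simp, ih.imp ?_⟩)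
    intro a b hab
    simp [List.Disjoint, hab, Ne.symm hab]

theorem length_boolListsUpTo (m : ℕ) : (boolListsUpTo m).length = 2 ^ (m + 1) - 1 := by
  induction m with
  | zero => rfl
  | succ m ih =>
    simp only [boolListsUpTo, List.length_cons, List.length_flatMap, List.length_nil,
      List.map_const', List.sum_replicate, smul_eq_mul, ih, pow_succ]
    have := Nat.one_le_two_pow (n := m + 1)
    omega

theorem primrec_boolListsUpTo : Primrec boolListsUpTo := by
  have step : Primrec₂ fun (_ : ℕ) (ls : List (List Bool)) =>
      ([] : List Bool) :: ls.flatMap fun l => [true :: l, false :: l] :=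
    (Primrec.list_cons.comp (Primrec.const []) <| Primrec.list_flatMap Primrec.snd <|
      (Primrec.list_cons.comp (Primrec.list_cons.comp (Primrec.const true) Primrec.snd) <|
        Primrec.list_cons.comp (Primrec.list_cons.comp (Primrec.const false) Primrec.snd)
          (Primrec.const [])).to₂).to₂
  refine (Primrec.nat_rec₁ [[]] step).of_eq fun m => ?_
  induction m with
  | zero => rfl
  | succ m ih => simp [boolListsUpTo, ← ih]

theorem natCard_length_le_and_eq_length_filter (m : ℕ) (P : List Bool → Prop) [DecidablePred P] :
    Nat.card {l : List Bool // l.length ≤ m ∧ P l} = ((boolListsUpTo m).filter (P ·)).length := by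
  rw [← List.toFinset_card_of_nodup ((nodup_boolListsUpTo m).filter _), ← Nat.card_eq_finsetCard]
  exact Nat.card_congr (Equiv.subtypeEquivRight fun l => by simp [mem_boolListsUpTo])

theorem Partrec.exists_monotone_halting_stage {α σ : Type*} [Primcodable α] [Primcodable σ]
    {f : α →. σ} (hf : Partrec f) :
    ∃ g : α → ℕ → Bool, Primrec₂ g ∧ (∀ a, Monotone (g a)) ∧
      ∀ a, (f a).Dom ↔ ∃ n, g a n = true := by
  obtain ⟨c, hc⟩ := Code.exists_code.1 hf
  have eval_encode (a : α) : c.eval (Encodable.encode a) = (f a).map Encodable.encode := by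
    simp [hc, Encodable.encodek]
  refine ⟨fun a n => (Code.evaln n c (Encodable.encode a)).isSome, ?_, ?_, ?_⟩
  · exact (Primrec.option_isSome.comp <| Code.primrec_evaln.comp <|
      (Primrec.snd.pair (Primrec.const c)).pair (Primrec.encode.comp Primrec.fst)).to₂
  · refine fun a m n hmn => Bool.le_iff_imp.2 fun h => ?_
    obtain ⟨v, hv⟩ := Option.isSome_iff_exists.1 h
    exact Option.isSome_iff_exists.2 ⟨v, Code.evaln_mono hmn hv⟩
  · intro a
    rw [← Part.map_Dom Encodable.encode, ← eval_encode]
    simp only [Part.dom_iff_mem, Code.evaln_complete, Option.isSome_iff_exists]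
    exact exists_comm

def dovetailStage {α : Type*} (g : α → ℕ → Bool) (S : List α) (k : ℕ) : Part ℕ :=
  Nat.rfind fun n => Part.some (decide (k ≤ (S.filter (g · n)).length))

section Dovetail

variable {α : Type*} {g : α → ℕ → Bool} {P : α → Prop}

theorem exists_stage_forall_mem (hmono : ∀ a, Monotone (g a))
    (hP : ∀ a, P a → ∃ n, g a n = true) (S : List α) :
    ∃ N, ∀ a ∈ S, P a → g a N = true := by
  have : ∀ a ∈ S, ∀ᶠ n in Filter.atTop, P a → g a n = true := fun a _ => by
    by_cases ha : P a
    · obtain ⟨n₀, hn₀⟩ := hP a ha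
      filter_upwards [Filter.eventually_ge_atTop n₀] with n hn _
      exact Bool.le_iff_imp.1 (hmono a hn) hn₀
    · simp [ha]
  exact ((Filter.eventually_all_finite S.finite_toSet).2 this).exists

theorem exists_dovetailStage_eq_some [DecidablePred P] (hmono : ∀ a, Monotone (g a))
    (hP : ∀ a, P a ↔ ∃ n, g a n = true) (S : List α) :
    ∃ n, dovetailStage g S (S.filter (P ·)).length = Part.some n ∧
      ∀ a ∈ S, g a n = true ↔ P a := by
  have accepted_sublist (n : ℕ) : (S.filter (g · n)).Sublist (S.filter (P ·)) :=
    List.monotone_filter_right _ fun a ha => decide_eq_true ((hP a).2 ⟨n, ha⟩)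
  obtain ⟨N, hN⟩ := exists_stage_forall_mem hmono (fun a => (hP a).1) S
  have filter_eq_at_N : S.filter (g · N) = S.filter (P ·) :=
    List.filter_congr fun a ha => Bool.eq_iff_iff.2
      ⟨fun h => decide_eq_true ((hP a).2 ⟨N, h⟩), fun h => hN a ha (of_decide_eq_true h)⟩
  have hdom : (dovetailStage g S (S.filter (P ·)).length).Dom :=
    Nat.rfind_dom.2 ⟨N, by simp [filter_eq_at_N], fun _ => trivial⟩
  obtain ⟨n, hn⟩ := Part.dom_iff_mem.1 hdom
  refine ⟨n, Part.eq_some_iff.2 hn, fun a ha => ?_⟩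
  have all_accepted : S.filter (g · n) = S.filter (P ·) :=
    (accepted_sublist n).eq_of_length_le (by simpa using Nat.rfind_spec hn)
  simpa [ha] using congrArg (a ∈ ·) all_accepted

end Dovetail

theorem Partrec.dovetailStage {α β : Type*} [Primcodable α] [Primcodable β]
    {g : α → ℕ → Bool} {S : β → List α} {k : β → ℕ}
    (hg : Primrec₂ g) (hS : Primrec S) (hk : Primrec k) :
    Partrec fun b => _root_.dovetailStage g (S b) (k b) := by
  have accepted : Primrec₂ fun (l : List α) (n : ℕ) => l.filter (g · n) :=
    (PrimrecRel.listFilter (R := fun a n => g a n = true)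
      (Primrec.eq.comp hg (Primrec.const true))).of_eq fun l n => by simp
  have test : Primrec₂ fun (b : β) (n : ℕ) => decide (k b ≤ ((S b).filter (g · n)).length) :=
    (Primrec.nat_le.comp (hk.comp Primrec.fst)
      (Primrec.list_length.comp (accepted.comp (hS.comp Primrec.fst) Primrec.snd))).decide
  exact Partrec.rfind (Computable.partrec test.to_comp)

theorem natCard_length_le_and_lt_two_pow (m : ℕ) (P : List Bool → Prop) :
    Nat.card {l : List Bool // l.length ≤ m ∧ P l} < 2 ^ (m + 1) := by
  classical
  calc Nat.card {l : List Bool // l.length ≤ m ∧ P l}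
      ≤ (boolListsUpTo m).length := by
        rw [natCard_length_le_and_eq_length_filter]; exact List.length_filter_le _ _
    _ < 2 ^ (m + 1) := by
        rw [length_boolListsUpTo]; exact Nat.sub_lt (Nat.two_pow_pos _) one_pos

def dovetailCandidates (x y : List Bool) : List (List Bool × List Bool) :=
  if x.length ≤ y.length then (boolListsUpTo y.length).map (·, y)
  else (boolListsUpTo x.length).map (x, ·)

theorem mem_dovetailCandidates (x y : List Bool) : (x, y) ∈ dovetailCandidates x y := by
  unfold dovetailCandidates
  split_ifs with h
  · simpa [mem_boolListsUpTo] using h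
  · simpa [mem_boolListsUpTo] using (not_le.1 h).le

theorem length_filter_dovetailCandidates (L : List Bool → List Bool → Prop) [DecidableRel L]
    (x y : List Bool) :
    ((dovetailCandidates x y).filter fun p => L p.1 p.2).length =
      if x.length ≤ y.length then Nat.card {x' : List Bool // x'.length ≤ y.length ∧ L x' y}
      else Nat.card {y' : List Bool // y'.length ≤ x.length ∧ L x y'} := by
  unfold dovetailCandidates
  split_ifs <;> simp [List.filter_map, Function.comp_def, natCard_length_le_and_eq_length_filter]

theorem primrec₂_dovetailCandidates : Primrec₂ dovetailCandidates :=
  Primrec.ite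
    (Primrec.nat_le.comp (Primrec.list_length.comp .fst) (Primrec.list_length.comp .snd))
    (Primrec.list_map (primrec_boolListsUpTo.comp (Primrec.list_length.comp .snd))
      (Primrec.snd.pair (Primrec.snd.comp .fst)).to₂)
    (Primrec.list_map (primrec_boolListsUpTo.comp (Primrec.list_length.comp .fst))
      ((Primrec.fst.comp .fst).pair .snd).to₂)

/-- `q = ((x, a), (y, b))` is the pair of messages sent by Alice and Bob. -/
def carol (g : List Bool × List Bool → ℕ → Bool) (q : (List Bool × ℕ) × (List Bool × ℕ)) :
    Part Bool :=
  (dovetailStage g (dovetailCandidates q.1.1 q.2.1)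
    (if q.1.1.length ≤ q.2.1.length then q.2.2 else q.1.2)).map (g (q.1.1, q.2.1))

theorem partrec_carol {g : List Bool × List Bool → ℕ → Bool} (hg : Primrec₂ g) :
    Partrec (carol g) := by
  have hx : Primrec fun q : (List Bool × ℕ) × (List Bool × ℕ) => q.1.1 := Primrec.fst.comp .fst
  have hy : Primrec fun q : (List Bool × ℕ) × (List Bool × ℕ) => q.2.1 := Primrec.fst.comp .snd
  have count : Primrec fun q : (List Bool × ℕ) × (List Bool × ℕ) =>
      if q.1.1.length ≤ q.2.1.length then q.2.2 else q.1.2 :=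
    Primrec.ite (Primrec.nat_le.comp (Primrec.list_length.comp hx) (Primrec.list_length.comp hy))
      (Primrec.snd.comp .snd) (Primrec.snd.comp .fst)
  exact (Partrec.dovetailStage hg (primrec₂_dovetailCandidates.comp hx hy) count).map
    (hg.comp ((hx.pair hy).comp .fst) .snd).to₂.to_comp

/-- Let `L` be a recursively enumerable language of pairs (the domain
of a partial computable function `f`). Then `L` is BSM-computable: Alice sends
`A(x) = (x, a_x)` where `a_x` is the number of `y'` with `|y'| ≤ |x|` and
`(x,y') ∈ L` (this count fits in `|x|+1` bits, making the message `2|x|+1` bits),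
Bob symmetrically sends `B(y) = (y, b_y)`, and there is a partial computable Carol
(the dovetailing procedure) that halts on every message pair arising from actual
inputs and correctly decides whether `(x,y) ∈ L`. -/
theorem stmt14 (L : List Bool → List Bool → Prop)
    (f : List Bool × List Bool →. Unit) (hf : Partrec f)
    (hfL : ∀ p : List Bool × List Bool, (f p).Dom ↔ L p.1 p.2) :
    ∃ (A B : List Bool → List Bool × ℕ)
      (carol : (List Bool × ℕ) × (List Bool × ℕ) →. Bool),
      Partrec carol ∧
      (∀ x, A x = (x, Nat.card {y' : List Bool // y'.length ≤ x.length ∧ L x y'})) ∧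
      (∀ y, B y = (y, Nat.card {x' : List Bool // x'.length ≤ y.length ∧ L x' y})) ∧
      (∀ x, (A x).2 < 2 ^ (x.length + 1)) ∧
      (∀ y, (B y).2 < 2 ^ (y.length + 1)) ∧
      (∀ x y, ∃ b : Bool, carol (A x, B y) = Part.some b ∧ (b = true ↔ L x y)) := by
  classical
  obtain ⟨g, hg, hmono, hdom⟩ := hf.exists_monotone_halting_stage
  refine ⟨_, _, carol g, partrec_carol hg, fun _ => rfl, fun _ => rfl,
    fun x => natCard_length_le_and_lt_two_pow _ _, fun y => natCard_length_le_and_lt_two_pow _ _,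
    fun x y => ?_⟩
  obtain ⟨n, hn, hmem⟩ := exists_dovetailStage_eq_some (P := fun p => L p.1 p.2) hmono
    (fun p => (hfL p).symm.trans (hdom p)) (dovetailCandidates x y)
  rw [length_filter_dovetailCandidates] at hn
  exact ⟨g (x, y) n, by simp [carol, hn], hmem _ (mem_dovetailCandidates x y)⟩
end

section
/- Let φ be a 3CNF over variables x_1,…,x_n, let C_1,…,C_N enumerate all N = 8·binom(n,3) clauses of width at most 3 over these variables, let π be any permutation of [2N], and introduce fresh variables y_1,…,y_{2N}. Define α = ∧_{i∈[N]} (C_i ∨ y_{π(i)}) and β = ∧_{i ∈ I ∪ J} ¬y_{π(i)} where I = {i ∈ [N] : C_i is a clause of φ} and J = {N + i : C_i is not a clause of φ}. Then φ is satisfiable if and only if α ∧ β is satisfiable. -/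
/-- A clause over variables `Fin n`: each variable occurs positively (`some true`),
negatively (`some false`), or not at all (`none`). -/
def clauseEval {n : ℕ} (cl : Fin n → Option Bool) (z : Fin n → Bool) : Prop :=
  ∃ v b, cl v = some b ∧ z v = b

def clauseWidth {n : ℕ} (cl : Fin n → Option Bool) : ℕ :=
  (Finset.univ.filter (fun v => (cl v).isSome)).card

/-- Let `φ` be a 3CNF (clauses of width at most 3, indexed by
`I ⊆ [N]` inside an enumeration `C_1,…,C_N` of all clauses of width at most 3),
let `π` be a permutation of `[2N]`, and introduce fresh variables `y_1,…,y_{2N}`.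
With `α = ∧_{i∈[N]} (C_i ∨ y_{π(i)})` and
`β = ∧_{i∈I} ¬y_{π(i)} ∧ ∧_{i∉I} ¬y_{π(N+i)}`, the formula `φ` is satisfiable iff
`α ∧ β` is satisfiable. -/
theorem stmt15 (n N : ℕ) (C : Fin N → Fin n → Option Bool)
    (hC : ∀ cl : Fin n → Option Bool, clauseWidth cl ≤ 3 → ∃ i, C i = cl)
    (hwidth : ∀ i, clauseWidth (C i) ≤ 3)
    (I : Finset (Fin N)) (π : Equiv.Perm (Fin (N + N))) :
    (∃ z : Fin n → Bool, ∀ i ∈ I, clauseEval (C i) z) ↔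
    (∃ (z : Fin n → Bool) (y : Fin (N + N) → Bool),
      (∀ i : Fin N, clauseEval (C i) z ∨ y (π (Fin.castAdd N i)) = true) ∧
      (∀ i ∈ I, y (π (Fin.castAdd N i)) = false) ∧
      (∀ i : Fin N, i ∉ I → y (π (Fin.natAdd N i)) = false)) := by
  constructor
  · rintro ⟨z, hz⟩
    refine ⟨z, fun w => decide (∃ j : Fin N, j ∉ I ∧ π (Fin.castAdd N j) = w), ?_, ?_, ?_⟩
    · intro i
      by_cases hi : i ∈ I
      · exact Or.inl (hz i hi)
      · exact Or.inr (by simp only [decide_eq_true_eq]; exact ⟨i, hi, rfl⟩)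
    · intro i hi
      simp only [decide_eq_false_iff_not]
      rintro ⟨j, hj, hje⟩
      have : j = i := by
        have := π.injective hje
        exact Fin.ext (by simpa using congrArg Fin.val this)
      exact hj (this ▸ hi)
    · intro i hi
      simp only [decide_eq_false_iff_not]
      rintro ⟨j, hj, hje⟩
      have := congrArg Fin.val (π.injective hje)
      simp [Fin.castAdd, Fin.natAdd] at this
      omega
  · rintro ⟨z, y, hα, hβ1, hβ2⟩
    refine ⟨z, fun i hi => ?_⟩
    rcases hα i with h | h
    · exact h
    · rw [hβ1 i hi] at h; exact absurd h (by simp)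
end

section
/- Let G = (V,E) be a graph on vertex set [n], let N = binom(n,2), let π be a permutation of [2N] (identifying [N] with the unordered pairs of [n]). Construct graphs A and B on vertex set Ṽ = V ∪ {a_j, b_j, c_j, a'_j, b'_j, c'_j : j ∈ [2N]} as follows. Edges of A: for each pair v < v' with j = π(v,v'), connect v to a_j and b_j, connect v' to a'_j and b'_j, and add the triangles (a_j,b_j,c_j) and (a'_j,b'_j,c'_j). Edges of B: {(c_{π(e)}, c'_{π(e)}) : e ∈ E} ∪ {(c_{π(N+e)}, c'_{π(N+e)}) : e ∉ E}. Then G is 3-colorable if and only if the graph A ∪ B is 3-colorable. -/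
def frc {V β : Type*} (r : V → V → Prop) (f : V → β)
    (h : ∀ u w, r u w → f u ≠ f w) : (SimpleGraph.fromRel r).Coloring β :=
  SimpleGraph.Coloring.mk f (fun {u w} hadj => hadj.2.elim (h u w) fun hr => (h w u hr).symm)



/-- Let `G` be a graph on `[n]`, `N = binom(n,2)`, `ι` an
identification of `[N]` with the ordered pairs `v < v'`, and `π` a permutation of
`[2N]`. Build graphs `A` and `B` on `Ṽ = [n] ∪ {a_j,b_j,c_j,a'_j,b'_j,c'_j : j ∈ [2N]}`
(the six gadget vertices of index `j` are encoded as `(j,0),…,(j,5)`): in `A`, for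
each pair `v < v'` with `j = π(ι(v,v'))`, connect `v` to `a_j, b_j`, connect `v'`
to `a'_j, b'_j`, and add the triangles `(a_j,b_j,c_j)`, `(a'_j,b'_j,c'_j)`; in `B`,
connect `c_{π(e)}` to `c'_{π(e)}` for `e ∈ E` and `c_{π(N+e)}` to `c'_{π(N+e)}`
for `e ∉ E`. Then `G` is 3-colorable iff `A ∪ B` is 3-colorable. -/
theorem stmt16 (n : ℕ) (G : SimpleGraph (Fin n))
    (ι : {q : Fin n × Fin n // q.1 < q.2} ≃ Fin (n.choose 2))
    (π : Equiv.Perm (Fin (n.choose 2 + n.choose 2))) :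
    G.Colorable 3 ↔
    (SimpleGraph.fromRel
      (fun u w : Fin n ⊕ (Fin (n.choose 2 + n.choose 2) × Fin 6) =>
        (∃ p : {q : Fin n × Fin n // q.1 < q.2},
          (u = Sum.inl p.1.1 ∧
            (w = Sum.inr (π (Fin.castAdd (n.choose 2) (ι p)), 0) ∨
             w = Sum.inr (π (Fin.castAdd (n.choose 2) (ι p)), 1))) ∨
          (u = Sum.inl p.1.2 ∧
            (w = Sum.inr (π (Fin.castAdd (n.choose 2) (ι p)), 3) ∨
             w = Sum.inr (π (Fin.castAdd (n.choose 2) (ι p)), 4))) ∨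
          (u = Sum.inr (π (Fin.castAdd (n.choose 2) (ι p)), 0) ∧
            w = Sum.inr (π (Fin.castAdd (n.choose 2) (ι p)), 1)) ∨
          (u = Sum.inr (π (Fin.castAdd (n.choose 2) (ι p)), 1) ∧
            w = Sum.inr (π (Fin.castAdd (n.choose 2) (ι p)), 2)) ∨
          (u = Sum.inr (π (Fin.castAdd (n.choose 2) (ι p)), 0) ∧
            w = Sum.inr (π (Fin.castAdd (n.choose 2) (ι p)), 2)) ∨
          (u = Sum.inr (π (Fin.castAdd (n.choose 2) (ι p)), 3) ∧
            w = Sum.inr (π (Fin.castAdd (n.choose 2) (ι p)), 4)) ∨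
          (u = Sum.inr (π (Fin.castAdd (n.choose 2) (ι p)), 4) ∧
            w = Sum.inr (π (Fin.castAdd (n.choose 2) (ι p)), 5)) ∨
          (u = Sum.inr (π (Fin.castAdd (n.choose 2) (ι p)), 3) ∧
            w = Sum.inr (π (Fin.castAdd (n.choose 2) (ι p)), 5))) ∨
        (∃ p : {q : Fin n × Fin n // q.1 < q.2},
          G.Adj p.1.1 p.1.2 ∧
          u = Sum.inr (π (Fin.castAdd (n.choose 2) (ι p)), 2) ∧
          w = Sum.inr (π (Fin.castAdd (n.choose 2) (ι p)), 5)) ∨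
        (∃ p : {q : Fin n × Fin n // q.1 < q.2},
          ¬ G.Adj p.1.1 p.1.2 ∧
          u = Sum.inr (π (Fin.natAdd (n.choose 2) (ι p)), 2) ∧
          w = Sum.inr (π (Fin.natAdd (n.choose 2) (ι p)), 5)))).Colorable 3 := by
  constructor
  · rintro ⟨c⟩
    refine ⟨frc _ (Sum.elim c fun jk =>
      if h : ((π.symm jk.1) : ℕ) < n.choose 2 then
        ![c (ι.symm ⟨(π.symm jk.1 : ℕ), h⟩).1.1 + 1,
          c (ι.symm ⟨(π.symm jk.1 : ℕ), h⟩).1.1 + 2,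
          c (ι.symm ⟨(π.symm jk.1 : ℕ), h⟩).1.1,
          c (ι.symm ⟨(π.symm jk.1 : ℕ), h⟩).1.2 + 1,
          c (ι.symm ⟨(π.symm jk.1 : ℕ), h⟩).1.2 + 2,
          c (ι.symm ⟨(π.symm jk.1 : ℕ), h⟩).1.2] jk.2
      else ![0,0,0,0,0,1] jk.2) ?_⟩
    have A1 : ∀ x : Fin 3, x ≠ x + 1 ∧ x ≠ x + 2 ∧ x + 1 ≠ x + 2 := by decide
    rintro u w (⟨p, ⟨rfl, rfl | rfl⟩ | ⟨rfl, rfl | rfl⟩ | ⟨rfl, rfl⟩ | ⟨rfl, rfl⟩ |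
        ⟨rfl, rfl⟩ | ⟨rfl, rfl⟩ | ⟨rfl, rfl⟩ | ⟨rfl, rfl⟩⟩ |
      ⟨p, hadj, rfl, rfl⟩ | ⟨p, hnadj, rfl, rfl⟩)
    all_goals
      simp only [Sum.elim_inl, Sum.elim_inr, Equiv.symm_apply_apply, Fin.coe_castAdd,
        Fin.coe_natAdd, Fin.eta, Fin.is_lt, dif_pos, Matrix.cons_val_zero, Matrix.cons_val_one,
        Matrix.head_cons, Matrix.cons_val_fin_one, Matrix.cons_val']
    all_goals first
      | exact (A1 _).1 | exact (A1 _).2.1 | exact (A1 _).2.2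
      | exact ((A1 _).1).symm | exact ((A1 _).2.1).symm | exact ((A1 _).2.2).symm
      | exact c.valid hadj
      | (rw [dif_neg (by omega), dif_neg (by omega)]; decide)
  · rintro ⟨C⟩
    have key : ∀ x a b cc : Fin 3, (x = a ∨ x = b ∨ a = b ∨ cc = a ∨ cc = b) ∨ cc = x := by
      decide
    have main : ∀ v v' : Fin n, v < v' → G.Adj v v' →
        C (Sum.inl v) ≠ C (Sum.inl v') := by
      intro v v' hlt hadj
      set p : {q : Fin n × Fin n // q.1 < q.2} := ⟨(v, v'), hlt⟩ with hp
      set j := π (Fin.castAdd (n.choose 2) (ι p)) with hj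
      have hva := C.valid (v := Sum.inl v) (w := Sum.inr (j, 0))
        ⟨by simp, Or.inl (Or.inl ⟨p, Or.inl ⟨rfl, Or.inl rfl⟩⟩)⟩
      have hvb := C.valid (v := Sum.inl v) (w := Sum.inr (j, 1))
        ⟨by simp, Or.inl (Or.inl ⟨p, Or.inl ⟨rfl, Or.inr rfl⟩⟩)⟩
      have hab := C.valid (v := Sum.inr (j, 0)) (w := Sum.inr (j, 1))
        ⟨by simp, Or.inl (Or.inl ⟨p, Or.inr (Or.inr (Or.inl ⟨rfl, rfl⟩))⟩)⟩
      have hca := C.valid (v := Sum.inr (j, 0)) (w := Sum.inr (j, 2))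
        ⟨by simp, Or.inl (Or.inl ⟨p, Or.inr (Or.inr (Or.inr (Or.inr (Or.inl ⟨rfl, rfl⟩))))⟩)⟩
      have hcb := C.valid (v := Sum.inr (j, 1)) (w := Sum.inr (j, 2))
        ⟨by simp, Or.inl (Or.inl ⟨p, Or.inr (Or.inr (Or.inr (Or.inl ⟨rfl, rfl⟩)))⟩)⟩
      have hva' := C.valid (v := Sum.inl v') (w := Sum.inr (j, 3))
        ⟨by simp, Or.inl (Or.inl ⟨p, Or.inr (Or.inl ⟨rfl, Or.inl rfl⟩)⟩)⟩
      have hvb' := C.valid (v := Sum.inl v') (w := Sum.inr (j, 4))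
        ⟨by simp, Or.inl (Or.inl ⟨p, Or.inr (Or.inl ⟨rfl, Or.inr rfl⟩)⟩)⟩
      have hab' := C.valid (v := Sum.inr (j, 3)) (w := Sum.inr (j, 4))
        ⟨by simp, Or.inl (Or.inl ⟨p, Or.inr (Or.inr (Or.inr (Or.inr (Or.inr (Or.inl ⟨rfl, rfl⟩)))))⟩)⟩
      have hca' := C.valid (v := Sum.inr (j, 3)) (w := Sum.inr (j, 5))
        ⟨by simp, Or.inl (Or.inl ⟨p, Or.inr (Or.inr (Or.inr (Or.inr (Or.inr (Or.inr (Or.inr ⟨rfl, rfl⟩))))))⟩)⟩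
      have hcb' := C.valid (v := Sum.inr (j, 4)) (w := Sum.inr (j, 5))
        ⟨by simp, Or.inl (Or.inl ⟨p, Or.inr (Or.inr (Or.inr (Or.inr (Or.inr (Or.inr (Or.inl ⟨rfl, rfl⟩))))))⟩)⟩
      have hB := C.valid (v := Sum.inr (j, 2)) (w := Sum.inr (j, 5))
        ⟨by simp, Or.inl (Or.inr (Or.inl ⟨p, hadj, rfl, rfl⟩))⟩
      have e1 : C (Sum.inr (j, 2)) = C (Sum.inl v) :=
        (key _ _ _ _).resolve_left (by
          simp only [not_or]
          exact ⟨hva, hvb, hab, hca.symm, hcb.symm⟩)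
      have e2 : C (Sum.inr (j, 5)) = C (Sum.inl v') :=
        (key _ _ _ _).resolve_left (by
          simp only [not_or]
          exact ⟨hva', hvb', hab', hca'.symm, hcb'.symm⟩)
      rw [e1, e2] at hB
      exact hB
    refine ⟨SimpleGraph.Coloring.mk (fun v => C (Sum.inl v)) ?_⟩
    intro v w hadj
    rcases lt_trichotomy v w with h | h | h
    · exact main v w h hadj
    · exact absurd h hadj.ne
    · exact (main w v h hadj.symm).symm
end

section
/- Let F be a family of subsets of a ground set of size N with |F| > Σ_{i=0}^{d−1} binom(N,i). Then there exists a set G of size d shattered by F; equivalently (contrapositive/Sauer–Shelah), if the VC dimension of F is at most k then |F| ≤ Σ_{i=0}^{k} binom(N,i). -/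
/-- Perles–Sauer–Shelah: If a family `F` of subsets of a ground set
of size `N` satisfies `|F| > Σ_{i=0}^{d−1} binom(N,i)`, then `F` shatters some set
of size `d` (equivalently, a family of VC dimension at most `k` has at most
`Σ_{i=0}^{k} binom(N,i)` members). -/
theorem stmt17 (N d : ℕ) (F : Finset (Finset (Fin N)))
    (h : (∑ i ∈ Finset.range d, N.choose i) < F.card) :
    ∃ G : Finset (Fin N), G.card = d ∧ ∀ T ⊆ G, ∃ s ∈ F, G ∩ s = T := by
  have hF : F.Nonempty := Finset.card_pos.1 (by omega)
  by_cases hd : d ≤ F.vcDim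
  · -- there is a shattered set of size vcDim ≥ d
    have hsh : F.shatterer.Nonempty :=
      ⟨∅, Finset.mem_shatterer.2 (Finset.shatters_empty.2 hF)⟩
    obtain ⟨s, hs, hcard⟩ := Finset.exists_mem_eq_sup F.shatterer hsh Finset.card
    have hscard : d ≤ s.card := by
      calc d ≤ F.vcDim := hd
        _ = s.card := hcard
    obtain ⟨G, hGs, hGcard⟩ := Finset.exists_subset_card_eq hscard
    refine ⟨G, hGcard, ?_⟩
    exact (Finset.mem_shatterer.1 hs).mono_right hGs
  · exfalso
    push_neg at hd
    have h1 : F.card ≤ F.shatterer.card := Finset.card_le_card_shatterer F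
    have h2 : F.shatterer.card ≤ ∑ k ∈ Finset.Iic F.vcDim, (Fintype.card (Fin N)).choose k :=
      Finset.card_shatterer_le_sum_vcDim
    have h3 : ∑ k ∈ Finset.Iic F.vcDim, (Fintype.card (Fin N)).choose k
        ≤ ∑ i ∈ Finset.range d, N.choose i := by
      simp only [Fintype.card_fin]
      rw [← Nat.Iio_eq_range]
      exact Finset.sum_le_sum_of_subset fun x hx => Finset.mem_Iio.2
        (lt_of_le_of_lt (Finset.mem_Iic.1 hx) hd)
    omega
end
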